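/- arXiv:1502.06398 — 10 statements merged into one kernel-verified Lean document; each statement's English description precedes it below -/
import Mathlib

section
/- Let f, g : [0,1] → ℝ be convex functions, let x* ∈ [0,1] be a minimizer of f over [0,1] and set f* = f(x*). Let x ∈ [0,1] satisfy g(x) ≤ f* < f(x). Then for every Borel probability measure ν on ℝ whose support is contained in the closed interval with endpoints x* and x, one has (∫(f−g)² dν) / (f(x)−g(x))² ≥ ν({x*}) · (∫(f−f*)² dν) / (f(x)−f*)². -/
/-!
Write `σ t = (f t - f x*) / (f x - f x*)`, which is nonnegative because `x*` minimises `f`.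
Convexity of `f` and `g` along the segment from `x*` to `x`, together with `g x ≤ f x* < f x`,
gives `σ t * (f x - g x) ≤ (f - g) t + |(f - g) x*|`. With `p = ν {x*}`, the identity
`(1 - p) u² + p c² - p (1 - p) (u + c)² = (p c - (1 - p) u)²` spreads the contribution
`p (f - g)(x*)²` of the atom over its complement, which has mass `1 - p`; integrating there
yields `p (1 - p) (f x - g x)² ∫ σ² ≤ (1 - p) ∫ (f - g)²`, since `σ` vanishes at `x*`.
Convex functions on `[0, 1]` are bounded, which gives the integrability.
-/

open MeasureTheory Set

theorem mul_one_sub_mul_add_sq_le (p u c : ℝ) :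
    p * (1 - p) * (u + c) ^ 2 ≤ (1 - p) * u ^ 2 + p * c ^ 2 := by
  nlinarith [sq_nonneg (p * c - (1 - p) * u)]

theorem measureReal_singleton_mul_integral_sq_le {α : Type*} [MeasurableSpace α]
    [MeasurableSingletonClass α] {ν : Measure α} [IsProbabilityMeasure ν] {z : α} {u v : α → ℝ}
    (hvz : v z = 0) (hv : ∀ᵐ t ∂ν, 0 ≤ v t ∧ v t ≤ u t + |u z|)
    (hu : Integrable (fun t => u t ^ 2) ν) :
    ν.real {z} * ∫ t, v t ^ 2 ∂ν ≤ ∫ t, u t ^ 2 ∂ν := by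
  set p := ν.real {z}
  have hv_compl : ∫ t in {z}ᶜ, v t ^ 2 ∂ν = ∫ t, v t ^ 2 ∂ν :=
    setIntegral_eq_integral_of_forall_compl_eq_zero fun t ht => by
      rw [not_not.1 ht, hvz, zero_pow two_ne_zero]
  have hu_split : ∫ t in {z}ᶜ, u t ^ 2 ∂ν + p * u z ^ 2 = ∫ t, u t ^ 2 ∂ν := by
    rw [add_comm, ← integral_add_compl (measurableSet_singleton z) hu, integral_singleton,
      smul_eq_mul]
  rw [← hv_compl, ← hu_split]
  rcases eq_or_ne (ν {z}ᶜ) 0 with hnull | hpos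
  · rw [Measure.restrict_eq_zero.2 hnull, integral_zero_measure, mul_zero]
    exact add_nonneg (integral_nonneg fun t => sq_nonneg _)
      (mul_nonneg measureReal_nonneg (sq_nonneg _))
  have hcompl : ν.real {z}ᶜ = 1 - p := probReal_compl_eq_one_sub (measurableSet_singleton z)
  have hp1 : 0 < 1 - p := hcompl ▸ ENNReal.toReal_pos hpos (measure_ne_top ν _)
  have hpt : ∀ᵐ t ∂ν.restrict {z}ᶜ, p * (1 - p) * v t ^ 2 ≤ (1 - p) * u t ^ 2 + p * u z ^ 2 := by
    refine ae_restrict_of_ae (hv.mono fun t ⟨hv0, hvu⟩ => ?_)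
    calc p * (1 - p) * v t ^ 2 ≤ p * (1 - p) * (|u t| + |u z|) ^ 2 := by
          refine mul_le_mul_of_nonneg_left (pow_le_pow_left₀ hv0 ?_ 2)
            (mul_nonneg measureReal_nonneg hp1.le)
          linarith [le_abs_self (u t)]
      _ ≤ (1 - p) * |u t| ^ 2 + p * |u z| ^ 2 := mul_one_sub_mul_add_sq_le _ _ _
      _ = (1 - p) * u t ^ 2 + p * u z ^ 2 := by rw [sq_abs, sq_abs]
  have hint := integral_mono_of_nonneg (ae_of_all _ fun t => by positivity)
    (g := fun t => (1 - p) * u t ^ 2 + p * u z ^ 2)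
    ((hu.restrict.const_mul _).add (integrable_const _)) hpt
  rw [integral_const_mul, integral_add (hu.restrict.const_mul _) (integrable_const _),
    integral_const_mul, setIntegral_const, smul_eq_mul, hcompl] at hint
  refine le_of_mul_le_mul_left ?_ hp1
  linarith

theorem ConvexOn.sub_mul_sub_le_of_mem_segment {E : Type*} [AddCommGroup E] [Module ℝ E]
    {s : Set E} {f g : E → ℝ} {x y t : E} (hf : ConvexOn ℝ s f) (hg : ConvexOn ℝ s g)
    (hy : y ∈ s) (hx : x ∈ s) (ht : t ∈ segment ℝ y x)
    (hyx : f y ≤ f x) (hgx : g x ≤ f y) :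
    (f t - f y) * (f x - g x) ≤ (f x - f y) * (f t - g t + |f y - g y|) := by
  obtain ⟨a, b, ha, hb, hab, rfl⟩ := ht
  obtain rfl : a = 1 - b := eq_sub_of_add_eq hab
  have hft := hf.2 hy hx ha hb hab
  have hgt := hg.2 hy hx ha hb hab
  generalize (1 - b) • y + b • x = t at hft hgt ⊢
  simp only [smul_eq_mul] at hft hgt
  have hA : 0 ≤ f x - f y := sub_nonneg.2 hyx
  have hd : 0 ≤ f y - g y + |f y - g y| := by linarith [neg_abs_le (f y - g y)]
  linarith [mul_nonneg hA (mul_nonneg ha hd),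
    mul_nonneg hA (mul_nonneg hb (abs_nonneg (f y - g y))),
    mul_nonneg (sub_nonneg.2 hgx) (by linarith : 0 ≤ b * (f x - f y) - (f t - f y)),
    mul_nonneg hA (sub_nonneg.2 hgt)]

namespace ConvexOn

variable {f : ℝ → ℝ} {a b : ℝ}

theorem two_mul_sub_max_le_of_mem_Icc (hf : ConvexOn ℝ (Icc a b) f) {t : ℝ} (ht : t ∈ Icc a b) :
    2 * f ((a + b) / 2) - max (f a) (f b) ≤ f t := by
  have ht' : a + b - t ∈ Icc a b := ⟨by linarith [ht.2], by linarith [ht.1]⟩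
  have hmid := hf.2 ht ht' (by norm_num : (0 : ℝ) ≤ 1 / 2) (by norm_num : (0 : ℝ) ≤ 1 / 2)
    (by norm_num)
  have hmax := hf.le_max_of_mem_Icc (left_mem_Icc.2 (ht.1.trans ht.2))
    (right_mem_Icc.2 (ht.1.trans ht.2)) ht'
  simp only [smul_eq_mul] at hmid
  rw [show 1 / 2 * t + 1 / 2 * (a + b - t) = (a + b) / 2 by ring] at hmid
  linarith

theorem aestronglyMeasurable_restrict_Icc (hf : ConvexOn ℝ (Icc a b) f) (μ : Measure ℝ) :
    AEStronglyMeasurable f (μ.restrict (Icc a b)) := by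
  rcases lt_or_ge b a with hba | hab
  · simp [Icc_eq_empty_of_lt hba]
  have hcont : ContinuousOn f (Ioo a b) :=
    interior_Icc (a := a) (b := b) ▸ hf.continuousOn_interior
  rw [← Ioo_union_both hab, insert_eq, aestronglyMeasurable_union_iff,
    aestronglyMeasurable_union_iff, Measure.restrict_singleton, Measure.restrict_singleton]
  exact ⟨hcont.aestronglyMeasurable measurableSet_Ioo, aestronglyMeasurable_dirac.smul_measure _,
    aestronglyMeasurable_dirac.smul_measure _⟩

theorem memLp_top {μ : Measure ℝ} (hf : ConvexOn ℝ (Icc a b) f) (hμ : μ (Icc a b)ᶜ = 0) :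
    MemLp f ⊤ μ := by
  have hae : ∀ᵐ t ∂μ, t ∈ Icc a b := ae_iff.2 hμ
  rw [← Measure.restrict_eq_self_of_ae_mem hae]
  set M := max (f a) (f b)
  refine memLp_top_of_bound (hf.aestronglyMeasurable_restrict_Icc μ)
    (max M (M - 2 * f ((a + b) / 2))) ?_
  filter_upwards [ae_restrict_mem measurableSet_Icc] with t ht
  have hab := ht.1.trans ht.2
  have hup : f t ≤ M := hf.le_max_of_mem_Icc (left_mem_Icc.2 hab) (right_mem_Icc.2 hab) ht
  have hlow := hf.two_mul_sub_max_le_of_mem_Icc ht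
  rw [Real.norm_eq_abs, abs_le]
  constructor <;> linarith [le_max_left M (M - 2 * f ((a + b) / 2)),
    le_max_right M (M - 2 * f ((a + b) / 2))]

end ConvexOn

/-- **Local-to-global lemma.** -/
theorem local_to_global
    (f g : ℝ → ℝ)
    (hf : ConvexOn ℝ (Icc (0:ℝ) 1) f) (hg : ConvexOn ℝ (Icc (0:ℝ) 1) g)
    (xstar : ℝ) (hxstar : xstar ∈ Icc (0:ℝ) 1)
    (hmin : ∀ y ∈ Icc (0:ℝ) 1, f xstar ≤ f y)
    (x : ℝ) (hx : x ∈ Icc (0:ℝ) 1)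
    (hgx : g x ≤ f xstar) (hfx : f xstar < f x)
    (ν : Measure ℝ) [IsProbabilityMeasure ν]
    (hν : ν (uIcc xstar x)ᶜ = 0) :
    (ν {xstar}).toReal * ((∫ t, (f t - f xstar) ^ 2 ∂ν) / (f x - f xstar) ^ 2)
      ≤ (∫ t, (f t - g t) ^ 2 ∂ν) / (f x - g x) ^ 2 := by
  have hsub : uIcc xstar x ⊆ Icc (0:ℝ) 1 := uIcc_subset_Icc hxstar hx
  have hνI : ν (Icc (0:ℝ) 1)ᶜ = 0 := measure_mono_null (compl_subset_compl.2 hsub) hν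
  have hA : 0 < f x - f xstar := sub_pos.2 hfx
  have hB : 0 < f x - g x := by linarith
  have hint : Integrable (fun t => (f t - g t) ^ 2) ν :=
    (((hf.memLp_top hνI).sub (hg.memLp_top hνI)).mono_exponent le_top).integrable_sq
  have hv : ∀ᵐ t ∂ν, 0 ≤ (f t - f xstar) * ((f x - g x) / (f x - f xstar)) ∧
      (f t - f xstar) * ((f x - g x) / (f x - f xstar)) ≤ f t - g t + |f xstar - g xstar| := by
    filter_upwards [ae_iff.2 hν] with t ht
    have hmt := hmin t (hsub ht)
    have key := hf.sub_mul_sub_le_of_mem_segment hg hxstar hx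
      ((segment_eq_uIcc xstar x).symm ▸ ht) hfx.le hgx
    refine ⟨mul_nonneg (sub_nonneg.2 hmt) (div_pos hB hA).le, ?_⟩
    rw [mul_div_assoc', div_le_iff₀ hA]
    linarith
  have h := measureReal_singleton_mul_integral_sq_le (by simp) hv hint
  simp_rw [mul_pow, integral_mul_const] at h
  rw [le_div_iff₀ (by positivity)]
  refine le_of_eq_of_le ?_ h
  rw [measureReal_def]
  field_simp
end

section
/- Let (Ω, μ) be a probability space and Y : Ω → ℝ a square-integrable random variable with Y ≥ 0 almost everywhere. Let A be a measurable event such that Y = 0 almost everywhere on A. Then Var(Y) = ∫Y² dμ − (∫Y dμ)² ≥ μ(A) · ∫Y² dμ. -/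
/-! Since `Y` vanishes on `A`, `∫ Y = ∫_{Aᶜ} Y`, and Cauchy–Schwarz on `Aᶜ` gives
`(∫ Y)² ≤ μ(Aᶜ) ∫ Y² = (1 - μ(A)) ∫ Y²`, which rearranges to the claim. -/

namespace MeasureTheory

variable {Ω : Type*} [MeasurableSpace Ω]

lemma sq_integral_le_measureReal_univ_mul_integral_sq (ν : Measure Ω) [IsFiniteMeasure ν]
    {g : Ω → ℝ} (hg0 : 0 ≤ᵐ[ν] g) (hg : MemLp g 2 ν) :
    (∫ ω, g ω ∂ν) ^ 2 ≤ ν.real Set.univ * ∫ ω, g ω ^ 2 ∂ν := by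
  have holder := integral_mul_le_Lp_mul_Lq_of_nonneg Real.HolderConjugate.two_two
    (f := fun _ ↦ (1 : ℝ)) (ae_of_all _ fun _ ↦ zero_le_one) hg0
    (by simpa using memLp_const (1 : ℝ)) (by simpa using hg)
  simp only [one_mul, Real.rpow_two, one_pow, integral_const, smul_eq_mul, mul_one] at holder
  calc (∫ ω, g ω ∂ν) ^ 2
      ≤ (ν.real Set.univ ^ (1 / 2 : ℝ) * (∫ ω, g ω ^ 2 ∂ν) ^ (1 / 2 : ℝ)) ^ 2 :=
        pow_le_pow_left₀ (integral_nonneg_of_ae hg0) holder 2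
    _ = ν.real Set.univ * ∫ ω, g ω ^ 2 ∂ν := by
        rw [mul_pow, ← Real.sqrt_eq_rpow, ← Real.sqrt_eq_rpow,
          Real.sq_sqrt measureReal_nonneg, Real.sq_sqrt (integral_nonneg fun _ ↦ sq_nonneg _)]

lemma sq_integral_le_measureReal_compl_mul_integral_sq (μ : Measure Ω) [IsFiniteMeasure μ]
    {Y : Ω → ℝ} (hY0 : 0 ≤ᵐ[μ] Y) (hY : MemLp Y 2 μ) {A : Set Ω}
    (hYA : ∀ᵐ ω ∂μ, ω ∈ A → Y ω = 0) :
    (∫ ω, Y ω ∂μ) ^ 2 ≤ μ.real Aᶜ * ∫ ω, Y ω ^ 2 ∂μ := by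
  have hY_on_compl : ∫ ω in Aᶜ, Y ω ∂μ = ∫ ω, Y ω ∂μ :=
    setIntegral_eq_integral_of_ae_compl_eq_zero <| by
      simpa only [Set.mem_compl_iff, not_not] using hYA
  rw [← hY_on_compl]
  calc (∫ ω in Aᶜ, Y ω ∂μ) ^ 2
      ≤ (μ.restrict Aᶜ).real Set.univ * ∫ ω in Aᶜ, Y ω ^ 2 ∂μ :=
        sq_integral_le_measureReal_univ_mul_integral_sq _ (ae_restrict_of_ae hY0) (hY.restrict _)
    _ ≤ μ.real Aᶜ * ∫ ω, Y ω ^ 2 ∂μ := by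
        rw [measureReal_restrict_apply_univ]
        exact mul_le_mul_of_nonneg_left
          (setIntegral_le_integral hY.integrable_sq (ae_of_all _ fun _ ↦ sq_nonneg _))
          measureReal_nonneg

end MeasureTheory

open MeasureTheory

/-- Variance lower bound used in Step 3 of the local-to-global lemma:
if `Y ≥ 0` is square-integrable and vanishes a.e. on an event `A`, then
`Var(Y) = E[Y²] − (E[Y])² ≥ μ(A)·E[Y²]`. -/
theorem variance_lower_bound
    {Ω : Type*} [MeasurableSpace Ω] (μ : Measure Ω) [IsProbabilityMeasure μ]
    (Y : Ω → ℝ) (hY : MemLp Y 2 μ) (hY0 : ∀ᵐ ω ∂μ, 0 ≤ Y ω)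
    (A : Set Ω) (hA : MeasurableSet A)
    (hYA : ∀ᵐ ω ∂μ, ω ∈ A → Y ω = 0) :
    (μ A).toReal * ∫ ω, (Y ω) ^ 2 ∂μ
      ≤ (∫ ω, (Y ω) ^ 2 ∂μ) - (∫ ω, Y ω ∂μ) ^ 2 := by
  have h_sq := sq_integral_le_measureReal_compl_mul_integral_sq μ hY0 hY hYA
  have h_compl : μ.real Aᶜ = 1 - μ.real A := probReal_compl_eq_one_sub hA
  rw [h_compl] at h_sq
  rw [← measureReal_def]
  linarith
end

section
/- Fix ε > 0 and a positive integer K. Let α ∈ ℝ^K with α_i ≥ 0 for all i and ∑_{i=1}^K α_i = 1, let ℓ : {1,…,K} → [0,1] and c : {1,…,K} → [0,1], and let i* be an index minimizing ℓ over {1,…,K}. Let S = { i ∈ {1,…,K} : c_i ≤ ℓ(i*) and α_i ≥ ε/K }, and define π_i = (1/2)α_i·1[i ∈ S] + (1 − (1/2)∑_{j∈S} α_j)·1[i = i*]. Then ∑_{i=1}^K π_i ℓ_i − ∑_{i=1}^K α_i c_i ≤ ∑_{i∈S} α_i (ℓ_i − c_i) + ε. -/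
/-!
Put the surviving mass `A = ∑_{i∈S} αᵢ`. Since `ℓ(i*) ≤ ℓᵢ`, moving the mass `A/2` that `π` places
on `S` back to `i*` can only lower `∑ πᵢℓᵢ`; after this, the left side minus `∑_{i∈S} αᵢ(ℓᵢ − cᵢ)`
is at most `∑_{i∉S} αᵢ(ℓ(i*) − cᵢ)`. An index leaves `S` either because `cᵢ > ℓ(i*)`, making its
term negative, or because `αᵢ < ε/K`, making its term less than `ε/K` as losses lie in `[0, 1]`;
there are at most `K` such indices.
-/

open Finset

section

variable {ι : Type*} [Fintype ι] [DecidableEq ι]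

theorem sum_ite_mem_add_ite_eq_mul (a b : ℝ) (α ℓ : ι → ℝ) (S : Finset ι) (i₀ : ι) :
    ∑ i, (a * α i * (if i ∈ S then 1 else 0) + b * (if i = i₀ then 1 else 0)) * ℓ i
      = a * ∑ i ∈ S, α i * ℓ i + b * ℓ i₀ := by
  simp only [add_mul, sum_add_distrib, mul_assoc, mul_ite, mul_one, mul_zero, ite_mul, zero_mul,
    sum_ite_mem, univ_inter, sum_ite_eq', mem_univ, if_true, ← mul_sum]

theorem half_mixture_sub_le_sum_add_sum_compl {α ℓ c : ι → ℝ} {S : Finset ι} {ℓ₀ : ℝ}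
    (hα0 : ∀ i ∈ S, 0 ≤ α i) (hα1 : ∑ i, α i = 1) (hℓ₀ : ∀ i ∈ S, ℓ₀ ≤ ℓ i) :
    (1/2) * ∑ i ∈ S, α i * ℓ i + (1 - (1/2) * ∑ i ∈ S, α i) * ℓ₀ - ∑ i, α i * c i
      ≤ ∑ i ∈ S, α i * (ℓ i - c i) + ∑ i ∈ Sᶜ, α i * (ℓ₀ - c i) := by
  have hmass : ∑ i ∈ Sᶜ, α i = 1 - ∑ i ∈ S, α i := by
    rw [← hα1, ← sum_compl_add_sum S α, add_sub_cancel_right]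
  have hcost := sum_compl_add_sum S (fun i => α i * c i)
  have hmin : ℓ₀ * ∑ i ∈ S, α i ≤ ∑ i ∈ S, α i * ℓ i := by
    rw [mul_sum]
    exact sum_le_sum fun i hi => by nlinarith [hα0 i hi, hℓ₀ i hi]
  simp only [mul_sub, sum_sub_distrib, ← sum_mul, hmass]
  linarith

theorem sum_compl_filter_mul_sub_le {α c : ι → ℝ} {ℓ₀ ε : ℝ} (hε : 0 ≤ ε)
    (hα0 : ∀ i, 0 ≤ α i) (hc0 : ∀ i, 0 ≤ c i) (hℓ₀ : ℓ₀ ≤ 1) :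
    ∑ i ∈ (univ.filter fun i => c i ≤ ℓ₀ ∧ ε / Fintype.card ι ≤ α i)ᶜ, α i * (ℓ₀ - c i) ≤ ε := by
  set δ := ε / Fintype.card ι
  have hδ : 0 ≤ δ := by positivity
  have hterm : ∀ i ∈ (univ.filter fun i => c i ≤ ℓ₀ ∧ δ ≤ α i)ᶜ, α i * (ℓ₀ - c i) ≤ δ := by
    intro i hi
    simp only [mem_compl, mem_filter, mem_univ, true_and, not_and_or, not_le] at hi
    rcases hi with hdominated | hsmall
    · nlinarith [hα0 i]
    · nlinarith [hα0 i, hc0 i]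
  calc _ ≤ _ := sum_le_card_nsmul _ _ δ hterm
    _ ≤ Fintype.card ι • δ := nsmul_le_nsmul_left hδ (card_le_univ _)
    _ ≤ ε := by
      rw [nsmul_eq_mul]
      rcases (Fintype.card ι).eq_zero_or_pos with h | h
      · simpa [h] using hε
      · rw [mul_div_cancel₀ _ (by positivity)]

end

theorem per_round_regret_bound_general
    (ε : ℝ) (hε : 0 < ε) (K : ℕ)
    (α ℓ c : Fin K → ℝ)
    (hα0 : ∀ i, 0 ≤ α i) (hα1 : ∑ i, α i = 1)
    (hℓ : ∀ i, ℓ i ∈ Set.Icc (0:ℝ) 1) (hc : ∀ i, c i ∈ Set.Icc (0:ℝ) 1)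
    (istar : Fin K) (histar : ∀ j, ℓ istar ≤ ℓ j)
    (S : Finset (Fin K))
    (hS : S = Finset.univ.filter (fun i => c i ≤ ℓ istar ∧ ε / K ≤ α i))
    (π : Fin K → ℝ)
    (hπ : ∀ i, π i = (1/2) * α i * (if i ∈ S then 1 else 0)
        + (1 - (1/2) * ∑ j ∈ S, α j) * (if i = istar then 1 else 0)) :
    ∑ i, π i * ℓ i - ∑ i, α i * c i ≤ (∑ i ∈ S, α i * (ℓ i - c i)) + ε := by
  have hmix : ∑ i, π i * ℓ i
      = (1/2) * ∑ i ∈ S, α i * ℓ i + (1 - (1/2) * ∑ j ∈ S, α j) * ℓ istar := by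
    simp only [hπ, sum_ite_mem_add_ite_eq_mul]
  have hsplit := half_mixture_sub_le_sum_add_sum_compl (c := c) (S := S) (fun i _ => hα0 i) hα1
    (fun i _ => histar i)
  have hdropped : ∑ i ∈ Sᶜ, α i * (ℓ istar - c i) ≤ ε := by
    simpa only [hS, Fintype.card_fin] using
      sum_compl_filter_mul_sub_le hε.le hα0 (fun i => (hc i).1) (hℓ istar).2
  linarith

/-- Deterministic content of the per-round regret bound for the modified Thompson
Sampling strategy: `∑ᵢ πᵢℓᵢ − ∑ᵢ αᵢcᵢ ≤ ∑_{i∈S} αᵢ(ℓᵢ − cᵢ) + ε`. -/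
theorem per_round_regret_bound
    (ε : ℝ) (hε : 0 < ε) (K : ℕ) (hK : 0 < K)
    (α ℓ c : Fin K → ℝ)
    (hα0 : ∀ i, 0 ≤ α i) (hα1 : ∑ i, α i = 1)
    (hℓ : ∀ i, ℓ i ∈ Set.Icc (0:ℝ) 1) (hc : ∀ i, c i ∈ Set.Icc (0:ℝ) 1)
    (istar : Fin K) (histar : ∀ j, ℓ istar ≤ ℓ j)
    (S : Finset (Fin K))
    (hS : S = Finset.univ.filter (fun i => c i ≤ ℓ istar ∧ ε / K ≤ α i))
    (π : Fin K → ℝ)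
    (hπ : ∀ i, π i = (1/2) * α i * (if i ∈ S then 1 else 0)
        + (1 - (1/2) * ∑ j ∈ S, α j) * (if i = istar then 1 else 0)) :
    ∑ i, π i * ℓ i - ∑ i, α i * c i ≤ (∑ i ∈ S, α i * (ℓ i - c i)) + ε :=
  per_round_regret_bound_general ε hε K α ℓ c hα0 hα1 hℓ hc istar histar S hS π hπ
end

section
/- Fix ε > 0 and a positive integer K; the grid points are x_i = i/K for i = 1,…,K. Let f : [0,1] → [0,1] be convex, let i* minimize f(x_j) over j ∈ {1,…,K} and set x* = x_{i*}. Let S ⊆ {1,…,K}, and for each i ∈ S let f_i : [0,1] → [0,1] be a convex function with f_i(x_i) ≤ f(x*). Let π be a probability vector on {1,…,K} with π_{i*} ≥ 1/2. Define ε_j = ε·|x_j − x*|, S_i = {j ∈ S : x_j lies in the closed interval with endpoints x_i and x*}, and for i ∈ S with i ≠ i* set w_i = ∑_{j∈S_i} π_j·((f(x_j) − f(x*) + ε_j)/(f(x_i) − f(x*) + ε_i))², while w_{i*} = π_{i*}. Then for every i ∈ S, ∑_{j=1}^K π_j (f(x_j) − f_i(x_j))² ≥ (1/4)·w_i·(f(x_i)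 − f_i(x_i))² − ε². -/
/-!
With `f_ε = f + ε |· - x*|`, the point `x*` is a strict minimiser of `f_ε` on every grid segment
`[x*, x_i]`. For `x_j` on that segment, convexity of `f_ε` bounds the ratio
`r_j = (f_ε(x_j) - f_ε(x*)) / (f_ε(x_i) - f_ε(x*))` by the barycentric coordinate of `x_j`, and
convexity of `f_i` together with `f_i(x_i) ≤ f(x*)` then transfers the gap at `x_i` to `x_j`:
`f(x_j) - f_i(x_j) ≥ r_j (f(x_i) - f_i(x_i)) - ε - |f(x*) - f_i(x*)|`. Squaring and averaging
against `π` over the segment, the term `|f(x*) - f_i(x*)|²` is paid for by the mass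
`π_{i*} ≥ 1/2`, which is at least the total mass of the other points.
-/

open Finset

/-- The local-to-global lemma. The ratio `(h z - h a) / (h b - h a)` is at most the barycentric
coordinate of `z` on `[a, b]`, which is what lets convexity of `k` carry the gap at `b` to `z`. -/
theorem ConvexOn.sub_div_sub_mul_sub_sub_abs_le {E : Type*} [AddCommGroup E] [Module ℝ E]
    {s : Set E} {h k : E → ℝ} {a b z : E} (hh : ConvexOn ℝ s h) (hk : ConvexOn ℝ s k)
    (ha : a ∈ s) (hb : b ∈ s) (hz : z ∈ segment ℝ a b) (hab : h a < h b) (hkb : k b ≤ h a) :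
    (h z - h a) / (h b - h a) * (h b - k b) - |h a - k a| ≤ h z - k z := by
  obtain ⟨α, β, hα, hβ, hαβ, rfl⟩ := hz
  obtain rfl : α = 1 - β := by linarith
  set r := (h ((1 - β) • a + β • b) - h a) / (h b - h a)
  have hden : 0 < h b - h a := sub_pos.2 hab
  have hhz : h ((1 - β) • a + β • b) - h a = r * (h b - h a) :=
    (div_mul_cancel₀ _ hden.ne').symm
  have hrβ : r ≤ β := by
    have := hh.2 ha hb hα hβ hαβ
    simp only [smul_eq_mul] at this
    rw [div_le_iff₀ hden]
    nlinarith
  have hkz := hk.2 ha hb hα hβ hαβ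
  simp only [smul_eq_mul] at hkz
  have hgap_a : -((1 - β) * |h a - k a|) ≤ (1 - β) * (h a - k a) := by
    rw [← mul_neg]
    exact mul_le_mul_of_nonneg_left (neg_abs_le _) hα
  nlinarith [mul_nonneg (sub_nonneg.2 hrβ) (sub_nonneg.2 hkb),
    mul_nonneg hβ (abs_nonneg (h a - k a))]

theorem sq_div_four_le_of_sub_le {a s e v : ℝ} (ha : 0 ≤ a) (h : a - e - s ≤ v) :
    a ^ 2 / 4 ≤ s ^ 2 + v ^ 2 + e ^ 2 := by
  have hav : a ≤ |s| + |e| + |v| := by linarith [le_abs_self s, le_abs_self e, le_abs_self v]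
  nlinarith [sq_nonneg (|s| - |e|), sq_nonneg (|s| - |v|), sq_nonneg (|e| - |v|), sq_abs s,
    sq_abs e, sq_abs v, abs_nonneg s, abs_nonneg e, abs_nonneg v]

/-- The local-to-global lemma for `f_ε = f + ε |· - a|`, squared; the regularization keeps the
denominator positive even where `f a = f b`. -/
theorem sq_gap_div_four_le {s : Set ℝ} {f k : ℝ → ℝ} {ε a b z : ℝ}
    (hf : ConvexOn ℝ s f) (hk : ConvexOn ℝ s k) (ha : a ∈ s) (hb : b ∈ s)
    (hz : z ∈ Set.uIcc a b) (hab : a ≠ b) (hε : 0 < ε) (hza : |z - a| ≤ 1)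
    (hfb : f a ≤ f b) (hfz : f a ≤ f z) (hkb : k b ≤ f a) :
    ((f z - f a + ε * |z - a|) / (f b - f a + ε * |b - a|) * (f b - k b)) ^ 2 / 4
      ≤ (f a - k a) ^ 2 + (f z - k z) ^ 2 + ε ^ 2 := by
  set fε : ℝ → ℝ := fun y => f y + ε * |y - a|
  have hfε : ConvexOn ℝ s fε := hf.add ((convexOn_dist a hf.1).smul hε.le)
  have hεb : 0 < ε * |b - a| := mul_pos hε (abs_pos.2 (sub_ne_zero.2 hab.symm))
  have hlocal := hfε.sub_div_sub_mul_sub_sub_abs_le hk ha hb (by rwa [segment_eq_uIcc])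
    (by simp only [fε, sub_self, abs_zero, mul_zero, add_zero]; linarith)
    (by simpa only [fε, sub_self, abs_zero, mul_zero, add_zero] using hkb)
  simp only [fε, sub_self, abs_zero, mul_zero, add_zero, add_sub_right_comm _ (ε * _)]
    at hlocal
  set r := (f z - f a + ε * |z - a|) / (f b - f a + ε * |b - a|)
  have hr : 0 ≤ r := div_nonneg (by positivity [hfz]) (by positivity [hfb])
  have hεz : ε * |z - a| ≤ ε := mul_le_of_le_one_right hε.le hza
  rw [← sq_abs (f a - k a)]
  refine sq_div_four_le_of_sub_le (mul_nonneg hr (by linarith)) ?_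
  nlinarith [mul_nonneg hr hεb.le]

/-- The mass of `U` is at most `1 / 2 ≤ π a`, so the `d a ^ 2` terms are absorbed by the term of
`a` itself. -/
theorem sum_mul_le_sum_mul_sq_add {ι : Type*} [DecidableEq ι] {U V : Finset ι} {a : ι}
    {π c d : ι → ℝ} {e : ℝ} (haV : a ∈ V) (hUV : U ⊆ V.erase a) (hπ : ∀ j, 0 ≤ π j)
    (hV : ∑ j ∈ V, π j = 1) (ha : 1 / 2 ≤ π a) (he : 0 ≤ e)
    (hc : ∀ j ∈ U, c j ≤ d a ^ 2 + d j ^ 2 + e) :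
    ∑ j ∈ U, π j * c j ≤ ∑ j ∈ V, π j * d j ^ 2 + e := by
  have hmassU : ∑ j ∈ U, π j ≤ 1 / 2 := by
    have := sum_le_sum_of_subset_of_nonneg hUV fun j _ _ => hπ j
    rw [← add_sum_erase V π haV] at hV
    linarith
  have haU : a ∉ U := fun h => (mem_erase.1 (hUV h)).1 rfl
  have hinsert : insert a U ⊆ V := insert_subset haV (hUV.trans (erase_subset a V))
  calc ∑ j ∈ U, π j * c j
      ≤ ∑ j ∈ U, π j * (d a ^ 2 + d j ^ 2 + e) :=
        sum_le_sum fun j hj => mul_le_mul_of_nonneg_left (hc j hj) (hπ j)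
    _ = (∑ j ∈ U, π j) * d a ^ 2 + ∑ j ∈ U, π j * d j ^ 2 + (∑ j ∈ U, π j) * e := by
        simp only [mul_add, sum_add_distrib, sum_mul]
    _ ≤ π a * d a ^ 2 + ∑ j ∈ U, π j * d j ^ 2 + e := by
        gcongr
        · linarith
        · exact mul_le_of_le_one_left he (by linarith)
    _ = ∑ j ∈ insert a U, π j * d j ^ 2 + e := by rw [sum_insert haU]
    _ ≤ ∑ j ∈ V, π j * d j ^ 2 + e := by
        gcongr
        exact fun j _ _ => mul_nonneg (hπ j) (sq_nonneg _)

theorem l2_bound_general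
    (ε : ℝ) (hε : 0 < ε) (K : ℕ) (hK : 0 < K)
    (x : ℕ → ℝ) (hx : ∀ i, x i = (i : ℝ) / K)
    (f : ℝ → ℝ) (hf : ConvexOn ℝ (Set.Icc (0:ℝ) 1) f)
    (istar : ℕ) (histar : istar ∈ Finset.Icc 1 K)
    (hmin : ∀ j ∈ Finset.Icc 1 K, f (x istar) ≤ f (x j))
    (S : Finset ℕ) (hSsub : S ⊆ Finset.Icc 1 K)
    (fi : ℕ → ℝ → ℝ)
    (hfi : ∀ i ∈ S, ConvexOn ℝ (Set.Icc (0:ℝ) 1) (fi i))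
    (hfix : ∀ i ∈ S, fi i (x i) ≤ f (x istar))
    (π : ℕ → ℝ) (hπ0 : ∀ i, 0 ≤ π i) (hπ1 : ∑ i ∈ Finset.Icc 1 K, π i = 1)
    (hπstar : 1 / 2 ≤ π istar)
    (εj : ℕ → ℝ) (hεj : ∀ j, εj j = ε * |x j - x istar|)
    (Si : ℕ → Finset ℕ)
    (hSi : ∀ i, Si i = S.filter
      (fun j => min (x i) (x istar) ≤ x j ∧ x j ≤ max (x i) (x istar)))
    (w : ℕ → ℝ)
    (hw : ∀ i ∈ S, i ≠ istar → w i = ∑ j ∈ Si i, π j *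
      ((f (x j) - f (x istar) + εj j) / (f (x i) - f (x istar) + εj i)) ^ 2)
    (hwstar : w istar = π istar) :
    ∀ i ∈ S,
      (1/4) * w i * (f (x i) - fi i (x i)) ^ 2 - ε ^ 2
        ≤ ∑ j ∈ Finset.Icc 1 K, π j * (f (x j) - fi i (x j)) ^ 2 := by
  intro i hiS
  have hgrid : ∀ j ∈ Icc 1 K, x j ∈ Set.Icc (0:ℝ) 1 := fun j hj => by
    rw [hx]
    exact ⟨by positivity, div_le_one_of_le₀ (by exact_mod_cast (mem_Icc.1 hj).2) (by positivity)⟩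
  rcases eq_or_ne i istar with rfl | hne
  · have hterm : ∀ j, 0 ≤ π j * (f (x j) - fi i (x j)) ^ 2 := fun j =>
      mul_nonneg (hπ0 j) (sq_nonneg _)
    rw [hwstar]
    nlinarith [single_le_sum (fun j _ => hterm j) (hSsub hiS), hterm i, sq_nonneg ε]
  have hxne : x i ≠ x istar := by
    rw [hx, hx, Ne, div_left_inj' (by positivity), Nat.cast_inj]
    exact hne
  have hSiU : (Si i).erase istar ⊆ (Icc 1 K).erase istar :=
    erase_subset_erase _ ((hSi i ▸ filter_subset _ _).trans hSsub)
  have hwi : 1 / 4 * w i * (f (x i) - fi i (x i)) ^ 2 = ∑ j ∈ (Si i).erase istar, π j *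
      (((f (x j) - f (x istar) + ε * |x j - x istar|) /
        (f (x i) - f (x istar) + ε * |x i - x istar|) * (f (x i) - fi i (x i))) ^ 2 / 4) := by
    rw [hw i hiS hne, ← sum_erase (Si i) (a := istar) (by simp [hεj]), mul_sum, sum_mul]
    exact sum_congr rfl fun j _ => by rw [hεj, hεj]; ring
  rw [hwi, sub_le_iff_le_add]
  refine sum_mul_le_sum_mul_sq_add histar hSiU hπ0 hπ1 hπstar (sq_nonneg ε) fun j hj => ?_
  obtain ⟨hjS, hjlo, hjhi⟩ := mem_filter.1 (hSi i ▸ mem_of_mem_erase hj)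
  exact sq_gap_div_four_le hf (hfi i hiS) (hgrid istar histar) (hgrid i (hSsub hiS))
    (by rw [Set.uIcc_comm]; exact ⟨hjlo, hjhi⟩) hxne.symm hε
    (by simpa only [Real.dist_eq] using
      Real.dist_le_of_mem_Icc_01 (hgrid j (hSsub hjS)) (hgrid istar histar))
    (hmin i (hSsub hiS)) (hmin j (hSsub hjS)) (hfix i hiS)

/-- The lemma relating the global `L²(π)` distance `‖f − fᵢ‖²_π` to the local gap
`f(xᵢ) − fᵢ(xᵢ)`, via the weights `wᵢ` built from the regularized function
`f_ε(x) = f(x) + ε|x − x*|`. -/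
theorem l2_bound
    (ε : ℝ) (hε : 0 < ε) (K : ℕ) (hK : 0 < K)
    (x : ℕ → ℝ) (hx : ∀ i, x i = (i : ℝ) / K)
    (f : ℝ → ℝ) (hf : ConvexOn ℝ (Set.Icc (0:ℝ) 1) f)
    (hf01 : ∀ t ∈ Set.Icc (0:ℝ) 1, f t ∈ Set.Icc (0:ℝ) 1)
    (istar : ℕ) (histar : istar ∈ Finset.Icc 1 K)
    (hmin : ∀ j ∈ Finset.Icc 1 K, f (x istar) ≤ f (x j))
    (S : Finset ℕ) (hSsub : S ⊆ Finset.Icc 1 K)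
    (fi : ℕ → ℝ → ℝ)
    (hfi : ∀ i ∈ S, ConvexOn ℝ (Set.Icc (0:ℝ) 1) (fi i))
    (hfi01 : ∀ i ∈ S, ∀ t ∈ Set.Icc (0:ℝ) 1, fi i t ∈ Set.Icc (0:ℝ) 1)
    (hfix : ∀ i ∈ S, fi i (x i) ≤ f (x istar))
    (π : ℕ → ℝ) (hπ0 : ∀ i, 0 ≤ π i) (hπ1 : ∑ i ∈ Finset.Icc 1 K, π i = 1)
    (hπstar : 1 / 2 ≤ π istar)
    (εj : ℕ → ℝ) (hεj : ∀ j, εj j = ε * |x j - x istar|)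
    (Si : ℕ → Finset ℕ)
    (hSi : ∀ i, Si i = S.filter
      (fun j => min (x i) (x istar) ≤ x j ∧ x j ≤ max (x i) (x istar)))
    (w : ℕ → ℝ)
    (hw : ∀ i ∈ S, i ≠ istar → w i = ∑ j ∈ Si i, π j *
      ((f (x j) - f (x istar) + εj j) / (f (x i) - f (x istar) + εj i)) ^ 2)
    (hwstar : w istar = π istar) :
    ∀ i ∈ S,
      (1/4) * w i * (f (x i) - fi i (x i)) ^ 2 - ε ^ 2
        ≤ ∑ j ∈ Finset.Icc 1 K, π j * (f (x j) - fi i (x j)) ^ 2 :=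
  l2_bound_general ε hε K hK x hx f hf istar histar hmin S hSsub fi hfi hfix π hπ0 hπ1 hπstar εj hεj
    Si hSi w hw hwstar
end

section
/- Fix 0 < ε ≤ 1 and a positive integer K; the grid points are x_i = i/K for i = 1,…,K. Let f : [0,1] → [0,1], let i* minimize f(x_j) over j ∈ {1,…,K} and set x* = x_{i*}. Let α be a probability vector on {1,…,K}, let S ⊆ {1,…,K} satisfy α_i ≥ ε/K for every i ∈ S, and define π_i = (1/2)α_i·1[i ∈ S] + (1 − (1/2)∑_{j∈S} α_j)·1[i = i*]. Define ε_j = ε·|x_j − x*|, S_i = {j ∈ S : x_j lies in the closed interval with endpoints x_i and x*}, and for i ∈ S with i ≠ i* set w_i = ∑_{j∈S_i} π_j·((f(x_j) − f(x*) + ε_j)/(f(x_i) − f(x*) + ε_i))², while w_{i*} = π_{i*}. Then ∑_{i∈S} α_i/w_i ≤ 20·log(2K/ε). -/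
/-!
Write `q j = π j * (f (x j) - f (x*) + ε_j) ^ 2`. Since `π i = α i / 2` for `i ∈ S`, `i ≠ i*`,
and `q` vanishes at `i*`, one has `α i / w i = 2 q i / β i`, where `β i` sums `q` over the points
of `S` on the same side of `x*` as `x i` and at most as far from it. Along one side, ordered
outwards from `x*`, the `β i` are the partial sums of the `q i`, and `1 - 1/t ≤ log t` gives
`q i / β i ≤ log (β i / β i')` with `β i'` the previous partial sum; the sum telescopes to at most
`1 + log (β_max / β_min)`. Every `q i` with `i ≠ i*` is at least `(ε/K)³/2` and their total is at
most `2`. Together with the term `α i* / π i* ≤ 2` this gives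
`6 + 4 log (4 (K/ε)³) ≤ 20 log (2K/ε)`.
-/

open Finset
-- `open Real` would turn the binder `π` of `log_sum_bound` into the constant `Real.pi`
open Real (log)

theorem div_add_le_log_add_div {a b : ℝ} (ha : 0 < a) (hb : 0 ≤ b) :
    b / (a + b) ≤ log ((a + b) / a) := by
  have h := Real.one_sub_inv_le_log_of_pos (show 0 < (a + b) / a by positivity)
  rwa [inv_div, one_sub_div (by positivity), add_sub_cancel_left] at h

theorem sum_div_sum_filter_le_le_one_add_log {ι β : Type*} [DecidableEq ι] [LinearOrder β]
    {d : ι → β} {h : ι → ℝ} {c : ℝ} (hc : 0 < c) (T : Finset ι) (hd : Set.InjOn d T)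
    (hh : ∀ i ∈ T, c ≤ h i) :
    ∑ i ∈ T, h i / ∑ j ∈ T with d j ≤ d i, h j ≤ 1 + log ((∑ i ∈ T, h i) / c) := by
  induction T using Finset.induction_on_max_value d with
  | empty => simp
  | insert a s ha hmax ih =>
    have hlt : ∀ i ∈ s, d i < d a := fun i hi => (hmax i hi).lt_of_ne fun h =>
      ne_of_mem_of_not_mem hi ha (hd (mem_insert_of_mem hi) (mem_insert_self a s) h)
    have hpartial : ∀ i ∈ s, ∑ j ∈ insert a s with d j ≤ d i, h j = ∑ j ∈ s with d j ≤ d i, h j :=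
      fun i hi => by rw [filter_insert, if_neg (hlt i hi).not_ge]
    have htop : ∑ j ∈ insert a s with d j ≤ d a, h j = h a + ∑ j ∈ s, h j := by
      rw [filter_true_of_mem fun j hj => ?_, sum_insert ha]
      rcases mem_insert.1 hj with rfl | hj
      exacts [le_rfl, hmax j hj]
    rw [sum_insert ha, htop, sum_congr rfl fun i hi => congrArg (h i / ·) (hpartial i hi),
      sum_insert ha, add_comm (h a)]
    have hca : c ≤ h a := hh a (mem_insert_self a s)
    rcases s.eq_empty_or_nonempty with rfl | hs
    · simp [div_self (hc.trans_le hca).ne', Real.log_nonneg ((one_le_div hc).2 hca)]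
    have hh' : ∀ i ∈ s, c ≤ h i := fun i hi => hh i (mem_insert_of_mem hi)
    have hsum : 0 < ∑ j ∈ s, h j := sum_pos (fun i hi => hc.trans_le (hh' i hi)) hs
    have hlast := div_add_le_log_add_div hsum (hc.le.trans hca)
    have hlog : log ((∑ j ∈ s, h j + h a) / ∑ j ∈ s, h j) + log ((∑ j ∈ s, h j) / c)
        = log ((∑ j ∈ s, h j + h a) / c) := by
      rw [← Real.log_mul (div_pos (by linarith) hsum).ne' (div_pos hsum hc).ne',
        div_mul_div_cancel₀ hsum.ne']
    linarith [ih (hd.mono (by simp)) hh']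

theorem min_le_and_le_max_iff_of_lt {α : Type*} [LinearOrder α] {a b t : α} (hba : b < a)
    (ht : t ≠ b) : (min a b ≤ t ∧ t ≤ max a b) ↔ b < t ∧ t ≤ a := by
  rw [min_eq_right hba.le, max_eq_left hba.le]
  exact and_congr_left fun _ => ⟨fun h => h.lt_of_ne' ht, le_of_lt⟩

section

variable {ι : Type*} [DecidableEq ι]

noncomputable def mixture (S : Finset ι) (i₀ : ι) (α : ι → ℝ) (i : ι) : ℝ :=
  (1/2) * α i * (if i ∈ S then 1 else 0) + (1 - (1/2) * ∑ j ∈ S, α j) * (if i = i₀ then 1 else 0)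

variable {S : Finset ι} {i₀ : ι} {x : ι → ℝ} {α π G w : ι → ℝ} {c B : ℝ}

theorem mixture_of_mem_of_ne {i : ι} (hi : i ∈ S) (hne : i ≠ i₀) :
    mixture S i₀ α i = α i / 2 := by
  simp [mixture, hi, hne]
  ring

theorem half_le_mixture_self (hα : ∀ i, 0 ≤ α i) (hS : ∑ j ∈ S, α j ≤ 1) :
    1 / 2 ≤ mixture S i₀ α i₀ := by
  simp only [mixture, if_true]
  split_ifs <;> linarith [hα i₀]

theorem sum_filter_lt_div_weight_le (hx : Function.Injective x) (hc : 0 < c)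
    (hcB : c ≤ B) (hπ : ∀ i ∈ S, i ≠ i₀ → π i = α i / 2) (hG₀ : G i₀ = 0)
    (hq : ∀ i ∈ S, i ≠ i₀ → c ≤ π i * G i ^ 2) (hB : ∑ i ∈ S.erase i₀, π i * G i ^ 2 ≤ B)
    (hw : ∀ i ∈ S, i ≠ i₀ → w i = ∑ j ∈ S with min (x i) (x i₀) ≤ x j ∧ x j ≤ max (x i) (x i₀),
      π j * (G j / G i) ^ 2) :
    ∑ i ∈ S with x i₀ < x i, α i / w i ≤ 2 * (1 + log (B / c)) := by
  set q : ι → ℝ := fun j => π j * G j ^ 2 with hq_def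
  set T := S.filter (x i₀ < x ·)
  have hmemT : ∀ {i}, i ∈ T → i ∈ S ∧ i ≠ i₀ := fun hi => by
    obtain ⟨hiS, hlt⟩ := mem_filter.1 hi
    exact ⟨hiS, fun h => hlt.ne (by rw [h])⟩
  have hqT : ∀ i ∈ T, c ≤ q i := fun i hi => hq i (hmemT hi).1 (hmemT hi).2
  have hterm : ∀ i ∈ T, α i / w i = 2 * (q i / ∑ j ∈ T with x j ≤ x i, q j) := by
    intro i hi
    obtain ⟨hiS, hne⟩ := hmemT hi
    have hGi : G i ≠ 0 := fun h => by linarith [hqT i hi, show q i = 0 by simp [q, h]]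
    have hsegment : {j ∈ S | min (x i) (x i₀) ≤ x j ∧ x j ≤ max (x i) (x i₀)}.erase i₀
        = {j ∈ T | x j ≤ x i} := by
      ext j
      simp only [mem_erase, mem_filter, T]
      by_cases hj : j = i₀
      · simp [hj]
      · rw [min_le_and_le_max_iff_of_lt (mem_filter.1 hi).2 (hx.ne hj)]
        tauto
    have hwi : w i = (∑ j ∈ T with x j ≤ x i, q j) / G i ^ 2 := by
      rw [hw i hiS hne, ← hsegment, sum_erase _ (by simp [q, hG₀]), sum_div]
      exact sum_congr rfl fun j _ => by rw [div_pow, mul_div_assoc]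
    simp only [hwi, hq_def, hπ i hiS hne]
    field_simp
  have hT_le : ∑ i ∈ T, q i ≤ B := by
    refine (sum_le_sum_of_subset_of_nonneg (fun i hi => ?_) fun i hi _ => ?_).trans hB
    · exact mem_erase.2 (hmemT hi).symm
    · exact (hc.trans_le (hq i (mem_erase.1 hi).2 (mem_erase.1 hi).1)).le
  calc ∑ i ∈ T, α i / w i = 2 * ∑ i ∈ T, q i / ∑ j ∈ T with x j ≤ x i, q j := by
        rw [mul_sum]; exact sum_congr rfl hterm
    _ ≤ 2 * (1 + log ((∑ i ∈ T, q i) / c)) := by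
        gcongr; exact sum_div_sum_filter_le_le_one_add_log hc T hx.injOn hqT
    _ ≤ 2 * (1 + log (B / c)) := by
        rcases T.eq_empty_or_nonempty with hT | hT
        · simp [hT, Real.log_nonneg ((one_le_div hc).2 hcB)]
        · gcongr
          exact div_pos (sum_pos (fun i hi => hc.trans_le (hqT i hi)) hT) hc

theorem sum_filter_ne_div_weight_le (hx : Function.Injective x) (hc : 0 < c)
    (hcB : c ≤ B) (hπ : ∀ i ∈ S, i ≠ i₀ → π i = α i / 2) (hG₀ : G i₀ = 0)
    (hq : ∀ i ∈ S, i ≠ i₀ → c ≤ π i * G i ^ 2) (hB : ∑ i ∈ S.erase i₀, π i * G i ^ 2 ≤ B)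
    (hw : ∀ i ∈ S, i ≠ i₀ → w i = ∑ j ∈ S with min (x i) (x i₀) ≤ x j ∧ x j ≤ max (x i) (x i₀),
      π j * (G j / G i) ^ 2) :
    ∑ i ∈ S with x i ≠ x i₀, α i / w i ≤ 4 * (1 + log (B / c)) := by
  have hright := sum_filter_lt_div_weight_le hx hc hcB hπ hG₀ hq hB hw
  -- the left side of `x i₀` is the right side for the reflected points `-x`
  have hleft := sum_filter_lt_div_weight_le (x := fun j => -x j) (neg_injective.comp hx) hc hcB
    hπ hG₀ hq hB (by simpa only [min_neg_neg, max_neg_neg, neg_le_neg_iff, and_comm] using hw)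
  simp only [neg_lt_neg_iff] at hleft
  have hsplit : ∑ i ∈ S with x i ≠ x i₀, α i / w i
      = ∑ i ∈ S with x i < x i₀, α i / w i + ∑ i ∈ S with x i₀ < x i, α i / w i := by
    rw [← sum_union (disjoint_filter.2 fun i _ h h' => h.asymm h'), ← filter_or]
    exact sum_congr (filter_congr fun i _ => ne_iff_lt_or_gt) fun _ _ => rfl
  linarith

theorem sum_filter_eq_div_weight_le (hx : Function.Injective x) (hα : ∀ i, 0 ≤ α i)
    (hS : ∑ j ∈ S, α j ≤ 1) (hw₀ : w i₀ = mixture S i₀ α i₀) :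
    ∑ i ∈ S with x i = x i₀, α i / w i ≤ 2 := by
  have hπ₀ := half_le_mixture_self (i₀ := i₀) hα hS
  rw [filter_congr fun i _ => hx.eq_iff, filter_eq']
  split_ifs with hi₀
  · rw [sum_singleton, hw₀, div_le_iff₀ (by linarith)]
    linarith [single_le_sum (fun j _ => hα j) hi₀]
  · simp

theorem sum_div_weight_le (hx : Function.Injective x) (hα : ∀ i, 0 ≤ α i)
    (hS : ∑ j ∈ S, α j ≤ 1) (hc : 0 < c) (hcB : c ≤ B) (hG₀ : G i₀ = 0)
    (hq : ∀ i ∈ S, i ≠ i₀ → c ≤ mixture S i₀ α i * G i ^ 2)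
    (hB : ∑ i ∈ S.erase i₀, mixture S i₀ α i * G i ^ 2 ≤ B)
    (hw : ∀ i ∈ S, i ≠ i₀ → w i = ∑ j ∈ S with min (x i) (x i₀) ≤ x j ∧ x j ≤ max (x i) (x i₀),
      mixture S i₀ α j * (G j / G i) ^ 2)
    (hw₀ : w i₀ = mixture S i₀ α i₀) :
    ∑ i ∈ S, α i / w i ≤ 2 + 4 * (1 + log (B / c)) := by
  rw [← sum_filter_add_sum_filter_not S (x · = x i₀)]
  exact add_le_add (sum_filter_eq_div_weight_le hx hα hS hw₀)
    (sum_filter_ne_div_weight_le hx hc hcB (fun _ hi hne => mixture_of_mem_of_ne hi hne) hG₀ hq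
      hB hw)

end

theorem one_div_le_abs_natCast_div_sub_natCast_div {K : ℝ} (hK : 0 < K) {i j : ℕ} (hij : i ≠ j) :
    1 / K ≤ |(i : ℝ) / K - j / K| := by
  rw [← sub_div, abs_div, abs_of_pos hK]
  gcongr
  exact_mod_cast Int.one_le_abs (sub_ne_zero.2 (Int.ofNat_inj.not.2 hij))

theorem grid_sub_add_mul_abs_sub_mem_Icc {K : ℕ} (hK : 0 < K) {f : ℝ → ℝ}
    (hf : ∀ t ∈ Set.Icc (0 : ℝ) 1, f t ∈ Set.Icc (0 : ℝ) 1) {ε : ℝ} (hε : 0 ≤ ε) (hε1 : ε ≤ 1)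
    {i j : ℕ} (hi : i ∈ Icc 1 K) (hj : j ∈ Icc 1 K) (hji : j ≠ i) (hfij : f (i / K) ≤ f (j / K)) :
    f (j / K) - f (i / K) + ε * |(j : ℝ) / K - i / K| ∈ Set.Icc (ε / K) 2 := by
  have hK' : (0 : ℝ) < K := Nat.cast_pos.2 hK
  have hmem : ∀ k ∈ Icc 1 K, (k : ℝ) / K ∈ Set.Icc (0 : ℝ) 1 := fun k hk =>
    ⟨by positivity, (div_le_one hK').2 (by exact_mod_cast (mem_Icc.1 hk).2)⟩
  have hdist : |(j : ℝ) / K - i / K| ≤ 1 :=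
    abs_sub_le_of_nonneg_of_le (hmem j hj).1 (hmem j hj).2 (hmem i hi).1 (hmem i hi).2
  have hsep := one_div_le_abs_natCast_div_sub_natCast_div hK' hji
  have hfi := hf _ (hmem i hi)
  have hfj := hf _ (hmem j hj)
  constructor
  · calc ε / K = ε * (1 / K) := by ring
      _ ≤ ε * |(j : ℝ) / K - i / K| := by gcongr
      _ ≤ _ := by linarith
  · linarith [hfj.2, hfi.1, mul_le_one₀ hε1 (abs_nonneg _) hdist]

theorem div_two_mul_sq_mem_Icc {a g δ : ℝ} (hδ : 0 ≤ δ) (ha : δ ≤ a) (hg : g ∈ Set.Icc δ 2) :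
    a / 2 * g ^ 2 ∈ Set.Icc (δ ^ 3 / 2) (2 * a) := by
  obtain ⟨hδg, hg2⟩ := hg
  constructor
  · calc δ ^ 3 / 2 = δ / 2 * δ ^ 2 := by ring
      _ ≤ a / 2 * g ^ 2 := by gcongr; linarith
  · have hg_sq : g ^ 2 ≤ 4 := by nlinarith
    nlinarith

theorem four_mul_one_add_log_add_two_le {δ : ℝ} (hδ : 0 < δ) (hδ1 : δ ≤ 1) :
    4 * (1 + log (2 / (δ ^ 3 / 2))) + 2 ≤ 20 * log (2 / δ) := by
  have h : 2 / (δ ^ 3 / 2) = (2 / δ) ^ 3 / 2 := by field_simp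
  have hlog : log 2 ≤ log (2 / δ) := Real.log_le_log two_pos (le_div_self zero_le_two hδ hδ1)
  rw [h, Real.log_div (by positivity) two_ne_zero, Real.log_pow]
  linarith [Real.log_two_gt_d9]

/-- The log-sum lemma for the modified Thompson Sampling algorithm:
`∑_{i∈S} αᵢ/wᵢ ≤ 20·log(2K/ε)`. -/
theorem log_sum_bound
    (ε : ℝ) (hε : 0 < ε) (hε1 : ε ≤ 1) (K : ℕ) (hK : 0 < K)
    (x : ℕ → ℝ) (hx : ∀ i, x i = (i : ℝ) / K)
    (f : ℝ → ℝ)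
    (hf01 : ∀ t ∈ Set.Icc (0:ℝ) 1, f t ∈ Set.Icc (0:ℝ) 1)
    (istar : ℕ) (histar : istar ∈ Finset.Icc 1 K)
    (hmin : ∀ j ∈ Finset.Icc 1 K, f (x istar) ≤ f (x j))
    (α : ℕ → ℝ) (hα0 : ∀ i, 0 ≤ α i) (hα1 : ∑ i ∈ Finset.Icc 1 K, α i = 1)
    (S : Finset ℕ) (hSsub : S ⊆ Finset.Icc 1 K)
    (hSα : ∀ i ∈ S, ε / K ≤ α i)
    (π : ℕ → ℝ)
    (hπ : ∀ i, π i = (1/2) * α i * (if i ∈ S then 1 else 0)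
        + (1 - (1/2) * ∑ j ∈ S, α j) * (if i = istar then 1 else 0))
    (εj : ℕ → ℝ) (hεj : ∀ j, εj j = ε * |x j - x istar|)
    (Si : ℕ → Finset ℕ)
    (hSi : ∀ i, Si i = S.filter
      (fun j => min (x i) (x istar) ≤ x j ∧ x j ≤ max (x i) (x istar)))
    (w : ℕ → ℝ)
    (hw : ∀ i ∈ S, i ≠ istar → w i = ∑ j ∈ Si i, π j *
      ((f (x j) - f (x istar) + εj j) / (f (x i) - f (x istar) + εj i)) ^ 2)
    (hwstar : w istar = π istar) :
    ∑ i ∈ S, α i / w i ≤ 20 * Real.log (2 * K / ε) := by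
  obtain rfl : π = mixture S istar α := funext hπ
  have hK' : (0 : ℝ) < K := Nat.cast_pos.2 hK
  have hx_inj : Function.Injective x := fun i j h => by simpa [hx, hK'.ne'] using h
  set δ := ε / K with hδ_def
  have hδ : 0 < δ := by positivity
  have hδ1 : δ ≤ 1 := div_le_one_of_le₀ (hε1.trans (by exact_mod_cast hK)) hK'.le
  set G : ℕ → ℝ := fun j => f (x j) - f (x istar) + εj j
  have hq : ∀ i ∈ S, i ≠ istar →
      mixture S istar α i * G i ^ 2 ∈ Set.Icc (δ ^ 3 / 2) (2 * α i) := fun i hi hne => by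
    have hG := grid_sub_add_mul_abs_sub_mem_Icc hK hf01 hε.le hε1 histar (hSsub hi) hne
      (by simpa only [hx] using hmin i (hSsub hi))
    simp only [mixture_of_mem_of_ne hi hne, G, hεj, hx]
    exact div_two_mul_sq_mem_Icc hδ.le (hSα i hi) hG
  have hαS : ∑ j ∈ S, α j ≤ 1 := hα1 ▸ sum_le_sum_of_subset_of_nonneg hSsub fun j _ _ => hα0 j
  have hB : ∑ i ∈ S.erase istar, mixture S istar α i * G i ^ 2 ≤ 2 := by
    refine (sum_le_sum fun i hi => (hq i (mem_erase.1 hi).2 (mem_erase.1 hi).1).2).trans ?_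
    rw [← mul_sum]
    linarith [sum_le_sum_of_subset_of_nonneg (erase_subset istar S) fun i _ _ => hα0 i]
  have hsum := sum_div_weight_le hx_inj hα0 hαS (by positivity)
    (by linarith [pow_le_one₀ (n := 3) hδ.le hδ1]) (by simp [G, hεj])
    (fun i hi hne => (hq i hi hne).1) hB (fun i hi hne => by rw [hw i hi hne, hSi]) hwstar
  rw [show 2 * K / ε = 2 / δ by rw [hδ_def]; field_simp]
  linarith [four_mul_one_add_log_add_two_le hδ hδ1]
end

section
/- Let n ≥ 1, let 𝒦 ⊆ ℝⁿ be a convex set that contains some closed Euclidean ball of radius r > 0, and let f : 𝒦 → ℝ be convex on 𝒦 with 0 ≤ f(x) ≤ 1 for all x ∈ 𝒦. Let 0 < ε ≤ 1 and let 𝒳 ⊆ 𝒦 be a δ-net of 𝒦 (i.e., for every y ∈ 𝒦 there exists x ∈ 𝒳 with ‖x − y‖ ≤ δ) with δ ≤ (1/4)·r·ε². Then inf_{x ∈ 𝒳} f(x) ≤ inf_{x ∈ 𝒦} f(x) + ε. -/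
/-!
Fix a ball `closedBall c r ⊆ 𝒦` and `y ∈ 𝒦`. The point `y' = (1 - ε) y + ε c` has a net point `x`
within `δ ≤ ε r`, and then `x = (1 - ε) y + ε w` for some `w` in the ball, hence in `𝒦`.
Convexity and `f ∈ [0, 1]` give `f x ≤ (1 - ε) f y + ε f w ≤ f y + ε`, so the minimum over the
net is within `ε` of the minimum over `𝒦`.
-/

open Metric

section NormedSpace

variable {E : Type*} [NormedAddCommGroup E] [NormedSpace ℝ E]

lemma exists_mem_closedBall_eq_convex_combination {x y c : E} {θ r : ℝ} (hθ : 0 < θ)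
    (hx : ‖x - ((1 - θ) • y + θ • c)‖ ≤ θ * r) :
    ∃ w ∈ closedBall c r, x = (1 - θ) • y + θ • w := by
  refine ⟨c + θ⁻¹ • (x - ((1 - θ) • y + θ • c)), ?_, ?_⟩
  · rw [mem_closedBall, dist_eq_norm, add_sub_cancel_left, norm_smul, Real.norm_eq_abs,
      abs_of_pos (inv_pos.mpr hθ), inv_mul_le_iff₀ hθ]
    exact hx
  · rw [smul_add, smul_smul, mul_inv_cancel₀ hθ.ne', one_smul]
    abel

lemma exists_mem_net_le_add_mul {𝒦 𝒳 : Set E} (hconv : Convex ℝ 𝒦) {c : E} {r : ℝ}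
    (hball : closedBall c r ⊆ 𝒦) (hc : c ∈ 𝒦) {f : E → ℝ} (hf : ConvexOn ℝ 𝒦 f) {M : ℝ}
    (hosc : ∀ y ∈ 𝒦, ∀ w ∈ 𝒦, f w ≤ f y + M) {θ δ : ℝ} (hθ0 : 0 < θ) (hθ1 : θ ≤ 1)
    (hδ : δ ≤ θ * r) (hnet : ∀ y ∈ 𝒦, ∃ x ∈ 𝒳, ‖x - y‖ ≤ δ) {y : E} (hy : y ∈ 𝒦) :
    ∃ x ∈ 𝒳, f x ≤ f y + θ * M := by
  obtain ⟨x, hx𝒳, hxy⟩ :=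
    hnet _ (hconv hy hc (sub_nonneg.mpr hθ1) hθ0.le (sub_add_cancel 1 θ))
  obtain ⟨w, hw, rfl⟩ := exists_mem_closedBall_eq_convex_combination hθ0 (hxy.trans hδ)
  refine ⟨_, hx𝒳, ?_⟩
  calc f ((1 - θ) • y + θ • w)
      ≤ (1 - θ) * f y + θ * f w :=
        hf.2 hy (hball hw) (sub_nonneg.mpr hθ1) hθ0.le (sub_add_cancel 1 θ)
    _ ≤ (1 - θ) * f y + θ * (f y + M) := by gcongr; exact hosc y hy w (hball hw)
    _ = f y + θ * M := by ring

end NormedSpace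

lemma csInf_image_le_csInf_image_add {α : Type*} {S T : Set α} {g : α → ℝ} {ε : ℝ}
    (hS : BddBelow (g '' S)) (hT : T.Nonempty) (h : ∀ y ∈ T, ∃ x ∈ S, g x ≤ g y + ε) :
    sInf (g '' S) ≤ sInf (g '' T) + ε := by
  rw [← sub_le_iff_le_add]
  refine le_csInf (hT.image g) ?_
  rintro _ ⟨y, hy, rfl⟩
  obtain ⟨x, hx, hxy⟩ := h y hy
  linarith [csInf_le hS ⟨x, hx, rfl⟩]

theorem net_discretization_general
    (n : ℕ) (𝒦 : Set (EuclideanSpace ℝ (Fin n)))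
    (hconv : Convex ℝ 𝒦) (r : ℝ) (hr : 0 < r)
    (hball : ∃ c, Metric.closedBall c r ⊆ 𝒦)
    (f : EuclideanSpace ℝ (Fin n) → ℝ) (hf : ConvexOn ℝ 𝒦 f)
    (hf01 : ∀ x ∈ 𝒦, f x ∈ Set.Icc (0:ℝ) 1)
    (ε δ : ℝ) (hε0 : 0 < ε) (hε1 : ε ≤ 1) (hδ : δ ≤ (1/4) * r * ε ^ 2)
    (𝒳 : Set (EuclideanSpace ℝ (Fin n))) (h𝒳 : 𝒳 ⊆ 𝒦)
    (hnet : ∀ y ∈ 𝒦, ∃ x ∈ 𝒳, ‖x - y‖ ≤ δ) :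
    sInf (f '' 𝒳) ≤ sInf (f '' 𝒦) + ε := by
  obtain ⟨c, hc⟩ := hball
  have hc𝒦 : c ∈ 𝒦 := hc (mem_closedBall_self hr.le)
  have hδε : δ ≤ ε * r := by
    nlinarith [mul_pos hr hε0, mul_nonneg (mul_pos hr hε0).le (sub_nonneg.mpr hε1)]
  have hosc : ∀ y ∈ 𝒦, ∀ w ∈ 𝒦, f w ≤ f y + 1 := fun y hy w hw => by
    linarith [(hf01 y hy).1, (hf01 w hw).2]
  have hbdd : BddBelow (f '' 𝒳) := ⟨0, by rintro _ ⟨x, hx, rfl⟩; exact (hf01 x (h𝒳 hx)).1⟩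
  refine csInf_image_le_csInf_image_add hbdd ⟨c, hc𝒦⟩ fun y hy => ?_
  simpa using exists_mem_net_le_add_mul hconv hc hc𝒦 hf hosc hε0 hε1 hδε hnet hy

/-- Discretization lemma: restricting a `[0,1]`-valued convex function to a
sufficiently fine `δ`-net of a convex body containing a ball of radius `r`
loses at most `ε` in the minimum. -/
theorem net_discretization
    (n : ℕ) (hn : 1 ≤ n) (𝒦 : Set (EuclideanSpace ℝ (Fin n)))
    (hconv : Convex ℝ 𝒦) (r : ℝ) (hr : 0 < r)
    (hball : ∃ c, Metric.closedBall c r ⊆ 𝒦)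
    (f : EuclideanSpace ℝ (Fin n) → ℝ) (hf : ConvexOn ℝ 𝒦 f)
    (hf01 : ∀ x ∈ 𝒦, f x ∈ Set.Icc (0:ℝ) 1)
    (ε δ : ℝ) (hε0 : 0 < ε) (hε1 : ε ≤ 1) (hδ : δ ≤ (1/4) * r * ε ^ 2)
    (𝒳 : Set (EuclideanSpace ℝ (Fin n))) (h𝒳 : 𝒳 ⊆ 𝒦)
    (hnet : ∀ y ∈ 𝒦, ∃ x ∈ 𝒳, ‖x - y‖ ≤ δ) :
    sInf (f '' 𝒳) ≤ sInf (f '' 𝒦) + ε :=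
  net_discretization_general n 𝒦 hconv r hr hball f hf hf01 ε δ hε0 hε1 hδ 𝒳 h𝒳 hnet
end

section
/- Let n ≥ 1, let 𝒦 ⊆ ℝⁿ be a convex set containing the closed Euclidean ball of radius r > 0 centered at the origin, let C > 0 and let f : 𝒦 → ℝ be convex on 𝒦 with 0 ≤ f(x) ≤ C for all x ∈ 𝒦. Let 0 < ε < 1 and set 𝒦_ε = (1−ε)·𝒦 = {(1−ε)z : z ∈ 𝒦}. Then for every x ∈ 𝒦_ε and every y ∈ 𝒦, |f(x) − f(y)| ≤ (C/(rε))·‖x − y‖. -/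
open scoped Pointwise
open Metric

/-!
Shrinking `𝒦` by the factor `1 - ε` leaves room for a ball of radius `rε` inside `𝒦` around
every point `x` of `(1 - ε)𝒦`. Given `y ∈ 𝒦` at distance `d` from `x`, walk from `x` a distance
`rε` towards `y` and away from `y`. Convexity along the resulting line bounds each of `f y - f x`
and `f x - f y` by `d / (rε)` times the oscillation of `f`, and that oscillation is at most `C`.
-/

theorem Convex.closedBall_subset_of_mem {E : Type*} [SeminormedAddCommGroup E] [NormedSpace ℝ E]
    {K : Set E} (hK : Convex ℝ K) {r : ℝ} (hball : closedBall 0 r ⊆ K) {z : E} (hz : z ∈ K)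
    {ε : ℝ} (hε0 : 0 < ε) (hε1 : ε ≤ 1) : closedBall ((1 - ε) • z) (ε * r) ⊆ K := by
  intro u hu
  set b := ε⁻¹ • (u - (1 - ε) • z)
  have hb : b ∈ closedBall (0 : E) r := by
    rw [mem_closedBall_zero_iff, norm_smul, Real.norm_of_nonneg (inv_nonneg.2 hε0.le),
      inv_mul_le_iff₀ hε0, ← dist_eq_norm]
    exact hu
  have hu_eq : (1 - ε) • z + ε • b = u := by
    simp only [b, smul_smul, mul_inv_cancel₀ hε0.ne', one_smul, add_sub_cancel]
  exact hu_eq ▸ hK hz (hball hb) (by linarith) hε0.le (by ring)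

section

variable {E : Type*} [NormedAddCommGroup E] [NormedSpace ℝ E] {K : Set E} {f : E → ℝ}
  {C δ : ℝ}

theorem ConvexOn.apply_add_smul_sub_sub_le (hf : ConvexOn ℝ K f) {a b : E} (ha : a ∈ K)
    (hb : b ∈ K) {t : ℝ} (ht0 : 0 ≤ t) (ht1 : t ≤ 1) :
    f (a + t • (b - a)) - f a ≤ t * (f b - f a) := by
  have hcombo : (1 - t) • a + t • b = a + t • (b - a) := by module
  have := hf.2 ha hb (sub_nonneg.2 ht1) ht0 (by ring)
  rw [hcombo, smul_eq_mul, smul_eq_mul] at this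
  linarith

theorem add_smul_div_norm_mem_closedBall (x : E) {v : E} (hv : v ≠ 0) (hδ : 0 ≤ δ) :
    x + (δ / ‖v‖) • v ∈ closedBall x δ := by
  rw [mem_closedBall, dist_eq_norm, add_sub_cancel_left, norm_smul, Real.norm_of_nonneg
    (by positivity), div_mul_cancel₀ _ (norm_ne_zero_iff.2 hv)]

variable (hf : ConvexOn ℝ K f) (hosc : ∀ u ∈ K, ∀ v ∈ K, f u - f v ≤ C) {x y : E}
  (hδ : 0 < δ) (hball : closedBall x δ ⊆ K) (hy : y ∈ K)
include hf hosc hδ hball hy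

theorem ConvexOn.apply_sub_apply_center_le : f y - f x ≤ C / δ * ‖x - y‖ := by
  have hC : 0 ≤ C := by simpa using hosc y hy y hy
  have hx : x ∈ K := hball (mem_closedBall_self hδ.le)
  rcases eq_or_ne y x with rfl | hyx
  · simp
  set d := ‖x - y‖
  have hd : ‖y - x‖ = d := norm_sub_rev y x
  rcases le_or_gt d δ with hdδ | _
  · -- `y` lies on the segment from `x` to the point `w` of the sphere around `x` beyond `y`
    set w := x + (δ / d) • (y - x)
    have hw : w ∈ K := by
      have := add_smul_div_norm_mem_closedBall x (sub_ne_zero.2 hyx) hδ.le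
      rw [hd] at this
      exact hball this
    have hdpos : 0 < d := norm_pos_iff.2 (sub_ne_zero.2 hyx.symm)
    have hy_eq : x + (d / δ) • (w - x) = y := by
      have hscal : d / δ * (δ / d) = 1 := by field_simp
      simp only [w, add_sub_cancel_left, smul_smul, hscal, one_smul, add_sub_cancel]
    calc f y - f x ≤ d / δ * (f w - f x) :=
          hy_eq ▸ hf.apply_add_smul_sub_sub_le hx hw (by positivity) ((div_le_one hδ).2 hdδ)
      _ ≤ d / δ * C := mul_le_mul_of_nonneg_left (hosc w hw x hx) (by positivity)
      _ = C / δ * d := by ring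
  · calc f y - f x ≤ C := hosc y hy x hx
      _ ≤ C / δ * d := by rw [div_mul_eq_mul_div, le_div_iff₀ hδ]; gcongr

theorem ConvexOn.apply_center_sub_apply_le : f x - f y ≤ C / δ * ‖x - y‖ := by
  have hC : 0 ≤ C := by simpa using hosc y hy y hy
  rcases eq_or_ne x y with rfl | hxy
  · simp
  set d := ‖x - y‖
  have hdpos : 0 < d := norm_pos_iff.2 (sub_ne_zero.2 hxy)
  -- `x` lies on the segment from `y` to the point `z` of the sphere around `x` opposite to `y`
  set z := x + (δ / d) • (x - y)
  have hz : z ∈ K := hball (add_smul_div_norm_mem_closedBall x (sub_ne_zero.2 hxy) hδ.le)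
  have hx_eq : y + (d / (δ + d)) • (z - y) = x := by
    have hzy : z - y = ((δ + d) / d) • (x - y) := by
      simp only [z]
      rw [add_div, div_self hdpos.ne']
      module
    have hscal : d / (δ + d) * ((δ + d) / d) = 1 := by field_simp
    rw [hzy, smul_smul, hscal, one_smul, add_sub_cancel]
  calc f x - f y ≤ d / (δ + d) * (f z - f y) :=
        hx_eq ▸ hf.apply_add_smul_sub_sub_le hy hz (by positivity)
          ((div_le_one (by positivity)).2 (by linarith))
    _ ≤ d / (δ + d) * C := mul_le_mul_of_nonneg_left (hosc z hz y hy) (by positivity)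
    _ ≤ d / δ * C := by gcongr; linarith
    _ = C / δ * d := by ring

theorem ConvexOn.abs_apply_center_sub_apply_le : |f x - f y| ≤ C / δ * ‖x - y‖ :=
  abs_sub_le_iff.2 ⟨hf.apply_center_sub_apply_le hosc hδ hball hy,
    hf.apply_sub_apply_center_le hosc hδ hball hy⟩

end

theorem effective_lipschitz_general
    (n : ℕ) (𝒦 : Set (EuclideanSpace ℝ (Fin n)))
    (hconv : Convex ℝ 𝒦) (r : ℝ) (hr : 0 < r)
    (hball : Metric.closedBall (0 : EuclideanSpace ℝ (Fin n)) r ⊆ 𝒦)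
    (C : ℝ)
    (f : EuclideanSpace ℝ (Fin n) → ℝ) (hf : ConvexOn ℝ 𝒦 f)
    (hf0 : ∀ x ∈ 𝒦, 0 ≤ f x) (hfC : ∀ x ∈ 𝒦, f x ≤ C)
    (ε : ℝ) (hε0 : 0 < ε) (hε1 : ε < 1)
    (𝒦ε : Set (EuclideanSpace ℝ (Fin n))) (h𝒦ε : 𝒦ε = (1 - ε) • 𝒦) :
    ∀ x ∈ 𝒦ε, ∀ y ∈ 𝒦, |f x - f y| ≤ (C / (r * ε)) * ‖x - y‖ := by
  rintro _ hx y hy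
  obtain ⟨z, hz, rfl⟩ := h𝒦ε ▸ hx
  have hosc : ∀ u ∈ 𝒦, ∀ v ∈ 𝒦, f u - f v ≤ C := fun u hu v hv => by
    linarith [hfC u hu, hf0 v hv]
  have hball_z := hconv.closedBall_subset_of_mem hball hz hε0 hε1.le
  rw [mul_comm r]
  exact hf.abs_apply_center_sub_apply_le hosc (mul_pos hε0 hr) hball_z hy

/-- Part (i) of the effective-Lipschitz lemma of Flaxman, Kalai and McMahan:
a convex function with values in `[0,C]` on `𝒦` is Lipschitz with constant
`C/(rε)` from the shrunk body `(1−ε)𝒦` to `𝒦`. -/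
theorem effective_lipschitz
    (n : ℕ) (hn : 1 ≤ n) (𝒦 : Set (EuclideanSpace ℝ (Fin n)))
    (hconv : Convex ℝ 𝒦) (r : ℝ) (hr : 0 < r)
    (hball : Metric.closedBall (0 : EuclideanSpace ℝ (Fin n)) r ⊆ 𝒦)
    (C : ℝ) (hC : 0 < C)
    (f : EuclideanSpace ℝ (Fin n) → ℝ) (hf : ConvexOn ℝ 𝒦 f)
    (hf0 : ∀ x ∈ 𝒦, 0 ≤ f x) (hfC : ∀ x ∈ 𝒦, f x ≤ C)
    (ε : ℝ) (hε0 : 0 < ε) (hε1 : ε < 1)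
    (𝒦ε : Set (EuclideanSpace ℝ (Fin n))) (h𝒦ε : 𝒦ε = (1 - ε) • 𝒦) :
    ∀ x ∈ 𝒦ε, ∀ y ∈ 𝒦, |f x - f y| ≤ (C / (r * ε)) * ‖x - y‖ :=
  effective_lipschitz_general n 𝒦 hconv r hr hball C f hf hf0 hfC ε hε0 hε1 𝒦ε h𝒦ε
end

section
/- Let n ≥ 1, let 𝒦 ⊆ ℝⁿ be a convex set containing the closed Euclidean ball of radius r > 0 centered at the origin, let C > 0 and let f : 𝒦 → ℝ be convex on 𝒦 with 0 ≤ f(x) ≤ C for all x ∈ 𝒦. Let 0 < ε < 1 and set 𝒦_ε = (1−ε)·𝒦 = {(1−ε)z : z ∈ 𝒦}. Then inf_{x ∈ 𝒦_ε} f(x) ≤ inf_{x ∈ 𝒦} f(x) + C·ε. -/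
open scoped Pointwise

/-!
Convexity along the segment from `0` to `x` gives `f (t • x) ≤ t f(x) + (1 - t) f(0)`, and since
`0 ≤ f ≤ C` this is at most `f(x) + C (1 - t)`. So every value of `f` on `s` is matched, up to
`C (1 - t)`, by a value on `t • s`.
-/

theorem Real.sInf_image_le_sInf_image_add {α : Type*} {f : α → ℝ} {s t : Set α} {c : ℝ}
    (hs : s.Nonempty) (hbdd : BddBelow (f '' t)) (h : ∀ x ∈ s, ∃ y ∈ t, f y ≤ f x + c) :
    sInf (f '' t) ≤ sInf (f '' s) + c := by
  rw [← sub_le_iff_le_add]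
  refine le_csInf (hs.image f) ?_
  rintro _ ⟨x, hx, rfl⟩
  obtain ⟨y, hy, hyx⟩ := h x hx
  linarith [csInf_le hbdd ⟨y, hy, rfl⟩]

section

variable {E : Type*} [AddCommGroup E] [Module ℝ E] {s : Set E} {f : E → ℝ} {t : ℝ}

theorem Convex.smul_set_subset_of_zero_mem (hs : Convex ℝ s) (h0 : (0 : E) ∈ s)
    (ht0 : 0 ≤ t) (ht1 : t ≤ 1) : t • s ⊆ s := by
  rintro _ ⟨x, hx, rfl⟩
  exact hs.smul_mem_of_zero_mem h0 hx ⟨ht0, ht1⟩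

theorem ConvexOn.map_smul_le_of_zero_mem (hf : ConvexOn ℝ s f) (h0 : (0 : E) ∈ s) {x : E}
    (hx : x ∈ s) (ht0 : 0 ≤ t) (ht1 : t ≤ 1) : f (t • x) ≤ t * f x + (1 - t) * f 0 := by
  simpa using hf.2 hx h0 ht0 (sub_nonneg.2 ht1) (add_sub_cancel t 1)

theorem ConvexOn.sInf_image_smul_le {C : ℝ} (hf : ConvexOn ℝ s f) (h0 : (0 : E) ∈ s)
    (hf0 : ∀ x ∈ s, 0 ≤ f x) (hfC : ∀ x ∈ s, f x ≤ C) (ht0 : 0 ≤ t) (ht1 : t ≤ 1) :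
    sInf (f '' (t • s)) ≤ sInf (f '' s) + C * (1 - t) := by
  have hsub := hf.1.smul_set_subset_of_zero_mem h0 ht0 ht1
  refine Real.sInf_image_le_sInf_image_add ⟨0, h0⟩ ⟨0, ?_⟩ fun x hx ↦ ?_
  · rintro _ ⟨y, hy, rfl⟩
    exact hf0 y (hsub hy)
  refine ⟨t • x, Set.smul_mem_smul_set hx, ?_⟩
  have hconvex := hf.map_smul_le_of_zero_mem h0 hx ht0 ht1
  nlinarith [hf0 x hx, hfC 0 h0]

end

theorem shrunk_body_min_general
    (n : ℕ) (𝒦 : Set (EuclideanSpace ℝ (Fin n)))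
    (r : ℝ) (hr : 0 < r)
    (hball : Metric.closedBall (0 : EuclideanSpace ℝ (Fin n)) r ⊆ 𝒦)
    (C : ℝ)
    (f : EuclideanSpace ℝ (Fin n) → ℝ) (hf : ConvexOn ℝ 𝒦 f)
    (hf0 : ∀ x ∈ 𝒦, 0 ≤ f x) (hfC : ∀ x ∈ 𝒦, f x ≤ C)
    (ε : ℝ) (hε0 : 0 < ε) (hε1 : ε < 1)
    (𝒦ε : Set (EuclideanSpace ℝ (Fin n))) (h𝒦ε : 𝒦ε = (1 - ε) • 𝒦) :
    sInf (f '' 𝒦ε) ≤ sInf (f '' 𝒦) + C * ε := by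
  have h0 : (0 : EuclideanSpace ℝ (Fin n)) ∈ 𝒦 := hball (Metric.mem_closedBall_self hr.le)
  subst h𝒦ε
  simpa only [sub_sub_cancel] using
    hf.sInf_image_smul_le (t := 1 - ε) h0 hf0 hfC (by linarith) (by linarith)

/-- Part (ii) of the effective-Lipschitz lemma of Flaxman, Kalai and McMahan:
shrinking the convex body by a factor `(1−ε)` increases the minimum of a
`[0,C]`-valued convex function by at most `Cε`. -/
theorem shrunk_body_min
    (n : ℕ) (hn : 1 ≤ n) (𝒦 : Set (EuclideanSpace ℝ (Fin n)))
    (hconv : Convex ℝ 𝒦) (r : ℝ) (hr : 0 < r)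
    (hball : Metric.closedBall (0 : EuclideanSpace ℝ (Fin n)) r ⊆ 𝒦)
    (C : ℝ) (hC : 0 < C)
    (f : EuclideanSpace ℝ (Fin n) → ℝ) (hf : ConvexOn ℝ 𝒦 f)
    (hf0 : ∀ x ∈ 𝒦, 0 ≤ f x) (hfC : ∀ x ∈ 𝒦, f x ≤ C)
    (ε : ℝ) (hε0 : 0 < ε) (hε1 : ε < 1)
    (𝒦ε : Set (EuclideanSpace ℝ (Fin n))) (h𝒦ε : 𝒦ε = (1 - ε) • 𝒦) :
    sInf (f '' 𝒦ε) ≤ sInf (f '' 𝒦) + C * ε :=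
  shrunk_body_min_general n 𝒦 r hr hball C f hf hf0 hfC ε hε0 hε1 𝒦ε h𝒦ε
end

section
/- For 0 < ε ≤ 1, define x_k = ε(1+ε)^k for every natural number k ≥ 0, and let 𝒳_ε = ({x_k : k ∈ ℕ} ∪ {1 − x_k : k ∈ ℕ}) ∩ [0,1]. Then for every convex function f : [0,1] → [0,1], inf_{x ∈ 𝒳_ε} f(x) ≤ inf_{x ∈ [0,1]} f(x) + 2ε. -/
/-!
Every `x ∈ [0,1]` has a grid point `y` between `x` and an endpoint `a ∈ {0,1}` with
`|y - x| ≤ ε |a - x|`: for `x ≥ ε` the largest `ε(1+ε)^k ≤ x` (toward `a = 0`), and for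
`x < ε` the point `ε` itself (toward `a = 1`). Convexity on the segment `[x, a]` then gives
`f y ≤ f x + ε (f a - f x) ≤ f x + ε`, because `f` takes values in `[0,1]`.
-/

open Set

lemma ConvexOn.le_add_of_abs_sub_le {s : Set ℝ} {f : ℝ → ℝ} (hf : ConvexOn ℝ s f)
    {x a y ε : ℝ} (hx : x ∈ s) (ha : a ∈ s) (hy : y ∈ segment ℝ x a) (hfa : f a ≤ f x + 1)
    (hε : 0 ≤ ε) (hyx : |y - x| ≤ ε * |a - x|) : f y ≤ f x + ε := by
  rw [segment_eq_image] at hy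
  obtain ⟨θ, ⟨hθ0, hθ1⟩, rfl⟩ := hy
  simp only [smul_eq_mul] at hyx ⊢
  have hconv : f ((1 - θ) * x + θ * a) ≤ (1 - θ) * f x + θ * f a := by
    simpa only [smul_eq_mul] using hf.2 hx ha (by linarith) hθ0 (by ring)
  rcases eq_or_ne a x with rfl | hax
  · simp only [← add_mul, sub_add_cancel, one_mul]
    linarith
  have hθε : θ ≤ ε := by
    have hdist : |(1 - θ) * x + θ * a - x| = θ * |a - x| := by
      rw [show (1 - θ) * x + θ * a - x = θ * (a - x) by ring, abs_mul, abs_of_nonneg hθ0]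
    rw [hdist] at hyx
    exact le_of_mul_le_mul_right hyx (abs_pos.2 (sub_ne_zero.2 hax))
  nlinarith

lemma exists_pow_mul_le_of_le {ε d : ℝ} (hε : 0 < ε) (hεd : ε ≤ d) :
    ∃ k : ℕ, ε * (1 + ε) ^ k ≤ d ∧ d - ε * (1 + ε) ^ k ≤ ε * d := by
  obtain ⟨k, hk_le, hk_lt⟩ :=
    exists_nat_pow_near ((one_le_div hε).2 hεd) (lt_add_of_pos_right 1 hε)
  rw [le_div_iff₀ hε] at hk_le
  rw [div_lt_iff₀ hε, pow_succ] at hk_lt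
  refine ⟨k, by linarith, ?_⟩
  nlinarith

lemma exists_geometric_point_near {ε x : ℝ} (hε0 : 0 < ε) (hε1 : ε ≤ 1)
    (hx : x ∈ Icc (0 : ℝ) 1) :
    ∃ k : ℕ, ∃ a ∈ ({0, 1} : Set ℝ),
      ε * (1 + ε) ^ k ∈ segment ℝ x a ∧ |ε * (1 + ε) ^ k - x| ≤ ε * |a - x| := by
  simp only [segment_eq_uIcc]
  rcases le_or_gt ε x with hεx | hxε
  · obtain ⟨k, hk_le, hk_gap⟩ := exists_pow_mul_le_of_le hε0 hεx
    have hk_pos : 0 < ε * (1 + ε) ^ k := by positivity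
    refine ⟨k, 0, by simp, by rw [uIcc_of_ge (by linarith)]; exact ⟨hk_pos.le, hk_le⟩, ?_⟩
    rw [abs_of_nonpos (by linarith), abs_of_nonpos (by linarith)]
    linarith
  · refine ⟨0, 1, by simp, ?_, ?_⟩
    · rw [pow_zero, mul_one, uIcc_of_le hx.2]
      exact ⟨hxε.le, hε1⟩
    · rw [pow_zero, mul_one, abs_of_pos (by linarith), abs_of_nonneg (by linarith [hx.2])]
      nlinarith [hx.1]

lemma Real.sInf_le_sInf_add_of_forall_exists_le {s t : Set ℝ} {c : ℝ} (hs : s.Nonempty)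
    (ht : BddBelow t) (h : ∀ x ∈ s, ∃ y ∈ t, y ≤ x + c) : sInf t ≤ sInf s + c := by
  rw [← sub_le_iff_le_add]
  refine le_csInf hs fun x hx => ?_
  obtain ⟨y, hy, hyx⟩ := h x hx
  linarith [csInf_le ht hy]

/-- Part (ii) of the geometric-grid lemma: the grid
`𝒳_ε = ({ε(1+ε)^k} ∪ {1 − ε(1+ε)^k}) ∩ [0,1]` approximates the minimum of every
convex function `f : [0,1] → [0,1]` to within `2ε`. -/
theorem geometric_grid_approx
    (ε : ℝ) (hε0 : 0 < ε) (hε1 : ε ≤ 1)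
    (𝒳 : Set ℝ)
    (h𝒳 : 𝒳 = ((Set.range fun k : ℕ => ε * (1 + ε) ^ k) ∪
        (Set.range fun k : ℕ => 1 - ε * (1 + ε) ^ k)) ∩ Set.Icc 0 1)
    (f : ℝ → ℝ) (hf : ConvexOn ℝ (Set.Icc (0:ℝ) 1) f)
    (hf01 : ∀ t ∈ Set.Icc (0:ℝ) 1, f t ∈ Set.Icc (0:ℝ) 1) :
    sInf (f '' 𝒳) ≤ sInf (f '' Set.Icc (0:ℝ) 1) + 2 * ε := by
  have hbdd : BddBelow (f '' 𝒳) := ⟨0, by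
    rintro _ ⟨y, hy, rfl⟩
    exact (hf01 y (h𝒳 ▸ hy).2).1⟩
  have hnear : ∀ z ∈ f '' Icc 0 1, ∃ w ∈ f '' 𝒳, w ≤ z + ε := by
    rintro _ ⟨x, hx, rfl⟩
    obtain ⟨k, a, ha, hseg, hdist⟩ := exists_geometric_point_near hε0 hε1 hx
    have ha01 : a ∈ Icc (0 : ℝ) 1 := by rcases ha with rfl | rfl <;> simp
    have hk01 := (convex_Icc (0 : ℝ) 1).segment_subset hx ha01 hseg
    have hk𝒳 : ε * (1 + ε) ^ k ∈ 𝒳 := by rw [h𝒳]; exact ⟨Or.inl ⟨k, rfl⟩, hk01⟩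
    refine ⟨_, ⟨_, hk𝒳, rfl⟩,
      hf.le_add_of_abs_sub_le hx ha01 hseg ?_ hε0.le hdist⟩
    linarith [(hf01 a ha01).2, (hf01 x hx).1]
  have hne : (f '' Icc (0 : ℝ) 1).Nonempty := (nonempty_Icc.2 zero_le_one).image f
  linarith [Real.sInf_le_sInf_add_of_forall_exists_le hne hbdd hnear]
end

section
/- Let (Ω, 𝔉, μ) be a probability space, let E be a real normed vector space (in which conditional expectations are defined, e.g. E finite-dimensional), and let m ⊆ m' be sub-σ-algebras of 𝔉. Let X* : Ω → E be a bounded measurable random vector, and set X = E[X* | m] and X' = E[X* | m']. Let G : Ω → E* (continuous linear functionals on E) be strongly m'-measurable with operator norm ‖G(ω)‖ ≤ 1 for almost every ω, and let R : Ω → ℝ be integrable with R(ω) ≤ G(ω)(X(ω) − X*(ω)) for almost every ω, where ω ↦ G(ω)(X(ω) − X*(ω)) is integrable. Then E[R] ≤ E[‖X − X'‖]. -/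
open MeasureTheory Filter
open scoped Topology

lemma aux_integrable_clm_apply {Ω : Type*} {mΩ : MeasurableSpace Ω} {μ : Measure Ω}
    {E : Type*} [NormedAddCommGroup E] [NormedSpace ℝ E]
    {F : Ω → E →L[ℝ] ℝ} (hF : AEStronglyMeasurable F μ) {C : ℝ}
    (hFb : ∀ᵐ ω ∂μ, ‖F ω‖ ≤ C) {Y : Ω → E} (hY : Integrable Y μ) :
    Integrable (fun ω => F ω (Y ω)) μ := by
  have hmeas : AEStronglyMeasurable (fun ω => F ω (Y ω)) μ :=
    (isBoundedBilinearMap_apply (𝕜 := ℝ) (E := E) (F := ℝ)).continuous.comp_aestronglyMeasurable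
      (hF.prodMk hY.1)
  refine Integrable.mono' (hY.norm.const_mul C) hmeas ?_
  filter_upwards [hFb] with ω hω
  calc ‖F ω (Y ω)‖ ≤ ‖F ω‖ * ‖Y ω‖ := (F ω).le_opNorm _
    _ ≤ C * ‖Y ω‖ := mul_le_mul_of_nonneg_right hω (norm_nonneg _)

lemma aux_integral_indicator {Ω : Type*} {mΩ : MeasurableSpace Ω} (μ : Measure Ω)
    {s : Set Ω} (hs : MeasurableSet s) (f : Ω → ℝ) :
    ∫ ω, s.indicator f ω ∂μ = ∫ ω in s, f ω ∂μ :=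
  integral_indicator hs

lemma aux_clm_integral_comp {Ω : Type*} {mΩ : MeasurableSpace Ω} (ν : Measure Ω)
    {E : Type*} [NormedAddCommGroup E] [NormedSpace ℝ E] [CompleteSpace E]
    (φ : E →L[ℝ] ℝ) {Z : Ω → E} (hZ : Integrable Z ν) :
    ∫ ω, φ (Z ω) ∂ν = φ (∫ ω, Z ω ∂ν) :=
  φ.integral_comp_comm hZ

lemma aux_integral_simpleFunc_condexp {Ω : Type*} {mΩ : MeasurableSpace Ω} (μ : Measure Ω)
    [IsFiniteMeasure μ] {E : Type*} [NormedAddCommGroup E] [NormedSpace ℝ E] [CompleteSpace E]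
    {m' : MeasurableSpace Ω} (hm' : m' ≤ mΩ)
    {Y : Ω → E} (hY : Integrable Y μ)
    (g : @SimpleFunc Ω m' (E →L[ℝ] ℝ)) :
    ∫ ω, g ω (Y ω) ∂μ = ∫ ω, g ω ((μ[Y|m']) ω) ∂μ := by
  have hY' : Integrable (μ[Y|m']) μ := integrable_condExp
  induction g using SimpleFunc.induction with
  | const φ hs =>
    rename_i s
    have hsΩ : MeasurableSet[mΩ] s := hm' _ hs
    have key : ∀ {Z : Ω → E}, Integrable Z μ →
        ∫ ω, (SimpleFunc.piecewise s hs (SimpleFunc.const Ω φ) (SimpleFunc.const Ω 0)) ω (Z ω) ∂μ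
          = φ (∫ ω in s, Z ω ∂μ) := by
      intro Z hZ
      have : (fun ω => (SimpleFunc.piecewise s hs (SimpleFunc.const Ω φ)
          (SimpleFunc.const Ω 0)) ω (Z ω))
          = fun ω => s.indicator (fun ω => φ (Z ω)) ω := by
        funext ω
        by_cases hω : ω ∈ s <;>
          simp [SimpleFunc.piecewise_apply, hω, Set.indicator_of_mem, Set.indicator_of_notMem]
      rw [this, aux_integral_indicator μ hsΩ (fun ω => φ (Z ω)),
        aux_clm_integral_comp (μ.restrict s) φ hZ.restrict]
    rw [key hY, key hY', setIntegral_condExp hm' hY hs]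
  | add hfg hf hg =>
    rename_i f g
    obtain ⟨Cf, hCf⟩ := f.exists_forall_norm_le
    obtain ⟨Cg, hCg⟩ := g.exists_forall_norm_le
    have hmf : ∀ (h : @SimpleFunc Ω m' (E →L[ℝ] ℝ)), AEStronglyMeasurable[mΩ] h μ := fun h =>
      (h.stronglyMeasurable.mono hm').aestronglyMeasurable
    have if1 : Integrable (fun ω => f ω (Y ω)) μ :=
      aux_integrable_clm_apply (hmf f) (Eventually.of_forall hCf) hY
    have ig1 : Integrable (fun ω => g ω (Y ω)) μ :=
      aux_integrable_clm_apply (hmf g) (Eventually.of_forall hCg) hY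
    have if2 : Integrable (fun ω => f ω ((μ[Y|m']) ω)) μ :=
      aux_integrable_clm_apply (hmf f) (Eventually.of_forall hCf) hY'
    have ig2 : Integrable (fun ω => g ω ((μ[Y|m']) ω)) μ :=
      aux_integrable_clm_apply (hmf g) (Eventually.of_forall hCg) hY'
    have h1 : (fun ω => (f + g) ω (Y ω)) = fun ω => f ω (Y ω) + g ω (Y ω) := by
      funext ω; simp
    have h2 : (fun ω => (f + g) ω ((μ[Y|m']) ω))
        = fun ω => f ω ((μ[Y|m']) ω) + g ω ((μ[Y|m']) ω) := by
      funext ω; simp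
    simp only [h1, h2, integral_add if1 ig1, integral_add if2 ig2, hf, hg]

lemma aux_integral_clm_condexp {Ω : Type*} {mΩ : MeasurableSpace Ω} (μ : Measure Ω)
    [IsFiniteMeasure μ] {E : Type*} [NormedAddCommGroup E] [NormedSpace ℝ E] [CompleteSpace E]
    {m' : MeasurableSpace Ω} (hm' : m' ≤ mΩ)
    {G : Ω → E →L[ℝ] ℝ} (hG : StronglyMeasurable[m'] G)
    (hGb : ∀ᵐ ω ∂μ, ‖G ω‖ ≤ 1)
    {Y : Ω → E} (hY : Integrable Y μ) :
    ∫ ω, G ω (Y ω) ∂μ = ∫ ω, G ω ((μ[Y|m']) ω) ∂μ := by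
  have hY' : Integrable (μ[Y|m']) μ := integrable_condExp
  obtain ⟨Gn, hGn_norm, hGn_tendsto⟩ :
      ∃ Gn : ℕ → @SimpleFunc Ω m' (E →L[ℝ] ℝ), (∀ n ω, ‖Gn n ω‖ ≤ 1) ∧
        ∀ᵐ ω ∂μ, Tendsto (fun n => Gn n ω) atTop (𝓝 (G ω)) := by
    refine ⟨hG.approxBounded 1, fun n ω => hG.norm_approxBounded_le zero_le_one n ω, ?_⟩
    filter_upwards [hGb] with ω hω using hG.tendsto_approxBounded_of_norm_le hω
  have hmf : ∀ n, AEStronglyMeasurable[mΩ] (fun ω => (Gn n) ω) μ := fun n =>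
    ((Gn n).stronglyMeasurable.mono hm').aestronglyMeasurable
  have key : ∀ {Z : Ω → E}, Integrable Z μ →
      Tendsto (fun n => ∫ ω, Gn n ω (Z ω) ∂μ) atTop (𝓝 (∫ ω, G ω (Z ω) ∂μ)) := by
    intro Z hZ
    refine tendsto_integral_of_dominated_convergence (fun ω => ‖Z ω‖)
      (fun n => (aux_integrable_clm_apply (hmf n)
        (Eventually.of_forall (hGn_norm n)) hZ).1) hZ.norm ?_ ?_
    · intro n
      refine Eventually.of_forall fun ω => ?_
      calc ‖Gn n ω (Z ω)‖ ≤ ‖Gn n ω‖ * ‖Z ω‖ := (Gn n ω).le_opNorm _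
        _ ≤ 1 * ‖Z ω‖ := mul_le_mul_of_nonneg_right (hGn_norm n ω) (norm_nonneg _)
        _ = ‖Z ω‖ := one_mul _
    · filter_upwards [hGn_tendsto] with ω hω
      have hcont := (isBoundedBilinearMap_apply (𝕜 := ℝ) (E := E) (F := ℝ)).continuous
      exact (hcont.tendsto (G ω, Z ω)).comp (hω.prodMk_nhds tendsto_const_nhds)
  have heq : ∀ n, ∫ ω, Gn n ω (Y ω) ∂μ = ∫ ω, Gn n ω ((μ[Y|m']) ω) ∂μ := fun n =>
    aux_integral_simpleFunc_condexp μ hm' hY (Gn n)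
  have h1 := key hY
  have h2 := key hY'
  rw [funext heq] at h1
  exact tendsto_nhds_unique h1 h2

/-- Conditional-expectation form of the instantaneous-regret bound for the
full-information Bayesian strategy `X = E[X* | m]`: if `R ≤ G(X − X*)` a.e. for a
`m'`-strongly-measurable family `G` of linear functionals of norm at most `1`, and
`X' = E[X* | m']` with `m ≤ m'`, then `E[R] ≤ E[‖X − X'‖]`. -/
theorem bayesian_instant_regret_bound
    {Ω : Type*} (m m' : MeasurableSpace Ω) {mΩ : MeasurableSpace Ω} (μ : Measure Ω) [IsProbabilityMeasure μ]
    {E : Type*} [NormedAddCommGroup E] [NormedSpace ℝ E] [CompleteSpace E]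
    (hmm' : m ≤ m') (hm' : m' ≤ mΩ)
    (Xstar : Ω → E) (hXstar_meas : StronglyMeasurable Xstar)
    (hXstar_bdd : ∃ C : ℝ, ∀ ω, ‖Xstar ω‖ ≤ C)
    (X X' : Ω → E) (hX : X = μ[Xstar|m]) (hX' : X' = μ[Xstar|m'])
    (G : Ω → E →L[ℝ] ℝ) (hG_meas : StronglyMeasurable[m'] G)
    (hG_norm : ∀ᵐ ω ∂μ, ‖G ω‖ ≤ 1)
    (R : Ω → ℝ) (hR_int : Integrable R μ)
    (hRG : ∀ᵐ ω ∂μ, R ω ≤ G ω (X ω - Xstar ω))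
    (hG_int : Integrable (fun ω => G ω (X ω - Xstar ω)) μ) :
    ∫ ω, R ω ∂μ ≤ ∫ ω, ‖X ω - X' ω‖ ∂μ := by
  obtain ⟨C, hC⟩ := hXstar_bdd
  have hm : m ≤ mΩ := hmm'.trans hm'
  have hXstar_int : Integrable Xstar μ :=
    Integrable.mono' (integrable_const C) hXstar_meas.aestronglyMeasurable
      (Eventually.of_forall hC)
  have hX_int : Integrable X μ := hX ▸ integrable_condExp
  have hX'_int : Integrable X' μ := hX' ▸ integrable_condExp
  have hY_int : Integrable (fun ω => X ω - Xstar ω) μ := hX_int.sub hXstar_int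
  -- X is m'-strongly measurable, so μ[X|m'] = X
  have hX_meas' : StronglyMeasurable[m'] X := hX ▸ (stronglyMeasurable_condExp.mono hmm')
  have hXcond : μ[X|m'] = X := condExp_of_stronglyMeasurable hm' hX_meas' hX_int
  have hcond_eq : μ[fun ω => X ω - Xstar ω|m'] =ᵐ[μ] fun ω => X ω - X' ω := by
    have h := condExp_sub (μ := μ) (m := m') hX_int hXstar_int
    have h' : μ[fun ω => X ω - Xstar ω|m'] =ᵐ[μ] μ[X|m'] - μ[Xstar|m'] := h
    refine h'.trans ?_
    rw [hXcond, ← hX']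
    exact Eventually.of_forall fun ω => rfl
  have step1 : ∫ ω, R ω ∂μ ≤ ∫ ω, G ω (X ω - Xstar ω) ∂μ :=
    integral_mono_ae hR_int hG_int hRG
  have step2 : ∫ ω, G ω (X ω - Xstar ω) ∂μ
      = ∫ ω, G ω ((μ[fun ω => X ω - Xstar ω|m']) ω) ∂μ :=
    aux_integral_clm_condexp μ hm' hG_meas hG_norm hY_int
  have step3 : ∫ ω, G ω ((μ[fun ω => X ω - Xstar ω|m']) ω) ∂μ
      = ∫ ω, G ω (X ω - X' ω) ∂μ := by
    refine integral_congr_ae ?_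
    filter_upwards [hcond_eq] with ω hω
    rw [hω]
  have hGXX'_int : Integrable (fun ω => G ω (X ω - X' ω)) μ :=
    aux_integrable_clm_apply (hG_meas.mono hm').aestronglyMeasurable hG_norm
      (hX_int.sub hX'_int)
  have step4 : ∫ ω, G ω (X ω - X' ω) ∂μ ≤ ∫ ω, ‖X ω - X' ω‖ ∂μ := by
    refine integral_mono_ae hGXX'_int (hX_int.sub hX'_int).norm ?_
    filter_upwards [hG_norm] with ω hω
    calc G ω (X ω - X' ω) ≤ ‖G ω (X ω - X' ω)‖ := le_abs_self _
      _ ≤ ‖G ω‖ * ‖X ω - X' ω‖ := (G ω).le_opNorm _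
      _ ≤ 1 * ‖X ω - X' ω‖ := mul_le_mul_of_nonneg_right hω (norm_nonneg _)
      _ = ‖X ω - X' ω‖ := one_mul _
  rw [step2, step3] at step1
  exact step1.trans step4
end
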